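/- arXiv:2409.07800 — 9 statements merged into one kernel-verified Lean document; each statement's English description precedes it below -/
import Mathlib

section
/- Let (X_n)_{n≥0} be a stochastic approximation algorithm taking values in [0,1], and assume g : [0,1] → ℝ is non-increasing and continuous with |g(x)| ≤ K_g for some positive constant K_g and all x ∈ [0,1], and that g has a unique zero x* in [0,1] (so that g(x) > 0 for x < x* and g(x) < 0 for x > x*). Then for any ε > 0 there exists a constant a > 0, independent of n, such that for all sufficiently large n, ℙ(|X_{n+1} − x*| > ε) ≤ 2 e^{−a n}. -/
/-!
Put `δ = ε / 2` and `b = x* + δ`, so that `g ≤ -c < 0` on `(b, 1]`. If `X (n + 1) > x* + ε`,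
consider the steps `j ∈ [k₀, n]` with `k₀ ≈ n / M` for a large constant `M`. Either the path
visits `[0, b]` there, and after its last visit `k` the drift is non-positive while a single step
is `O(1 / k₀)`; or it stays above `b`, and the drift `∑ γ (j + 1) g (X j) ≤ -c ul log (M / 2)`
pushes it down by more than the diameter of `[0, 1]`. Either way the noise
`∑_{j = k}^{n} γ (j + 1) U (j + 1)` exceeds `δ / 2` for some `k ∈ [k₀, n]`. The noise terms are
`O(1 / j)` with conditional means `O(1 / j ^ 2)`, so a Chernoff bound with parameter proportional
to `k` makes each of these `n` events exponentially unlikely in `n`. Deviations below `x*` are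
deviations above `1 - x*` of the process `1 - X`.
-/

open MeasureTheory Filter Real Finset

lemma sum_Ico_inv_sq_le {k N : ℕ} (hk : 1 ≤ k) : ∑ j ∈ Ico k N, ((j : ℝ) ^ 2)⁻¹ ≤ 2 / k := by
  obtain ⟨k, rfl⟩ := Nat.exists_eq_add_of_le' hk
  rw [← Order.succ_eq_add_one, Finset.Ico_succ_left_eq_Ioo]
  exact_mod_cast sum_Ioo_inv_sq_le k N

lemma log_div_le_sum_Ico_inv {k N : ℕ} (h : k ≤ N) :
    log ((N + 1) / (k + 1)) ≤ ∑ j ∈ Ico k N, ((j : ℝ) + 1)⁻¹ := by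
  rw [log_div (by positivity) (by positivity),
    ← sum_Ico_sub (f := fun j : ℕ ↦ log ((j : ℝ) + 1)) h]
  refine sum_le_sum fun j _ ↦ ?_
  rw [← log_div (by positivity) (by positivity)]
  calc log (((j + 1 : ℕ) + 1) / ((j : ℝ) + 1)) ≤ ((j + 1 : ℕ) + 1) / ((j : ℝ) + 1) - 1 :=
        log_le_sub_one_of_pos (by positivity)
    _ = ((j : ℝ) + 1)⁻¹ := by push_cast; field_simp; ring

lemma exists_nat_le_mul_and_mul_succ_le {M : ℝ} (hM : 2 ≤ M) {n : ℕ} (hn : 2 * M ≤ n) :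
    ∃ k₀ : ℕ, 1 ≤ k₀ ∧ k₀ ≤ n ∧ (n : ℝ) ≤ M * k₀ ∧ M * (k₀ + 1) ≤ 2 * (n + 2) := by
  have hM0 : 0 < M := by linarith
  have hceil : M * ⌈(n : ℝ) / M⌉₊ < n + M :=
    calc M * ⌈(n : ℝ) / M⌉₊ < M * ((n : ℝ) / M + 1) := by
          gcongr; exact Nat.ceil_lt_add_one (by positivity)
      _ = n + M := by field_simp
  have hle : (n : ℝ) / M ≤ ⌈(n : ℝ) / M⌉₊ := Nat.le_ceil _
  refine ⟨⌈(n : ℝ) / M⌉₊, Nat.one_le_iff_ne_zero.2 ?_, ?_, by rwa [div_le_iff₀' hM0] at hle,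
    by nlinarith⟩
  · exact (Nat.ceil_pos.2 (div_pos (by linarith) hM0)).ne'
  · have : (⌈(n : ℝ) / M⌉₊ : ℝ) ≤ n := by nlinarith
    exact_mod_cast this

lemma eventually_natCast_mul_exp_sub_le {a : ℝ} (ha : 0 < a) (K : ℝ) :
    ∀ᶠ n : ℕ in atTop, n * exp (K - a * n) ≤ exp (-(a / 2) * n) := by
  have hlim := (tendsto_exp_mul_div_rpow_atTop 1 (a / 2) (by positivity)).comp
    tendsto_natCast_atTop_atTop
  filter_upwards [hlim.eventually_ge_atTop (exp K), eventually_gt_atTop 0] with n hn hn0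
  simp only [Function.comp_apply, rpow_one] at hn
  rw [le_div_iff₀ (by positivity)] at hn
  calc n * exp (K - a * n) = exp K * n * exp (-(a * n)) := by rw [sub_eq_add_neg, exp_add]; ring
    _ ≤ exp (a / 2 * n) * exp (-(a * n)) := by gcongr
    _ = exp (-(a / 2) * n) := by rw [← exp_add]; ring_nf

section Concentration

open ProbabilityTheory

variable {Ω : Type*} {m m0 : MeasurableSpace Ω} {μ : Measure Ω}

lemma condExp_exp_mul_le [IsFiniteMeasure μ] (hm : m ≤ m0) {Y : Ω → ℝ}
    (hY : AEStronglyMeasurable Y μ) {B e t : ℝ} (ht : 0 ≤ t) (htB : t * B ≤ 1)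
    (hB : ∀ᵐ ω ∂μ, |Y ω| ≤ B) (he : ∀ᵐ ω ∂μ, μ[Y|m] ω ≤ e) :
    ∀ᵐ ω ∂μ, μ[fun ω ↦ exp (t * Y ω)|m] ω ≤ exp (t * e + t ^ 2 * B ^ 2) := by
  have hY_int : Integrable Y μ := .of_bound hY B (by simpa only [norm_eq_abs] using hB)
  have hexp_int : Integrable (fun ω ↦ exp (t * Y ω)) μ :=
    integrable_exp_mul_of_mem_Icc hY.aemeasurable (hB.mono fun _ ↦ abs_le.1)
  have hquad : (fun ω ↦ exp (t * Y ω)) ≤ᵐ[μ] fun ω ↦ (1 + t ^ 2 * B ^ 2) + t * Y ω := by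
    filter_upwards [hB] with ω hω
    have htY : |t * Y ω| ≤ 1 := by rw [abs_mul, abs_of_nonneg ht]; nlinarith [abs_nonneg (Y ω)]
    have hsq : (t * Y ω) ^ 2 ≤ t ^ 2 * B ^ 2 := by
      rw [mul_pow, ← sq_abs (Y ω)]
      gcongr
    linarith [(abs_le.1 (abs_exp_sub_one_sub_id_le htY)).2]
  have hlin : μ[fun ω ↦ (1 + t ^ 2 * B ^ 2) + t * Y ω|m] =ᵐ[μ]
      fun ω ↦ (1 + t ^ 2 * B ^ 2) + t * μ[Y|m] ω := by
    filter_upwards [condExp_add (integrable_const (1 + t ^ 2 * B ^ 2)) (hY_int.smul t) m,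
      condExp_smul (μ := μ) t Y m] with ω h1 h2
    rw [condExp_const hm, Pi.add_apply, h2] at h1
    exact h1
  filter_upwards [condExp_mono hexp_int ((integrable_const _).add (hY_int.const_mul t)) hquad,
    hlin, he] with ω h1 h2 h3
  calc μ[fun ω ↦ exp (t * Y ω)|m] ω ≤ (1 + t ^ 2 * B ^ 2) + t * μ[Y|m] ω := h1.trans_eq h2
    _ ≤ (t * e + t ^ 2 * B ^ 2) + 1 := by nlinarith
    _ ≤ exp (t * e + t ^ 2 * B ^ 2) := add_one_le_exp _

lemma integral_exp_mul_add_le [IsFiniteMeasure μ] (hm : m ≤ m0) {S Y : Ω → ℝ}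
    (hS : StronglyMeasurable[m] S) (hY : AEStronglyMeasurable Y μ) {B e t : ℝ}
    (hS_int : Integrable (fun ω ↦ exp (t * S ω)) μ) (ht : 0 ≤ t) (htB : t * B ≤ 1)
    (hB : ∀ᵐ ω ∂μ, |Y ω| ≤ B) (he : ∀ᵐ ω ∂μ, μ[Y|m] ω ≤ e) :
    ∫ ω, exp (t * (S ω + Y ω)) ∂μ ≤ exp (t * e + t ^ 2 * B ^ 2) * ∫ ω, exp (t * S ω) ∂μ := by
  set f : Ω → ℝ := fun ω ↦ exp (t * S ω)
  set h : Ω → ℝ := fun ω ↦ exp (t * Y ω)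
  have hh_int : Integrable h μ :=
    integrable_exp_mul_of_mem_Icc hY.aemeasurable (hB.mono fun _ ↦ abs_le.1)
  have hfh_int : Integrable (f * h) μ := hS_int.mul_bdd hh_int.1 (c := exp (t * B)) <| by
    filter_upwards [hB] with ω hω
    rw [norm_of_nonneg (exp_nonneg _), exp_le_exp]
    nlinarith [le_abs_self (Y ω)]
  have hpull : μ[f * h|m] =ᵐ[μ] f * μ[h|m] :=
    condExp_mul_of_stronglyMeasurable_left (continuous_exp.comp_stronglyMeasurable (hS.const_mul t))
      hfh_int hh_int
  calc ∫ ω, exp (t * (S ω + Y ω)) ∂μ = ∫ ω, μ[f * h|m] ω ∂μ := by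
        rw [integral_condExp hm]
        simp only [f, h, Pi.mul_apply, ← exp_add, mul_add]
    _ = ∫ ω, f ω * μ[h|m] ω ∂μ := integral_congr_ae hpull
    _ ≤ ∫ ω, f ω * exp (t * e + t ^ 2 * B ^ 2) ∂μ := by
        refine integral_mono_ae (integrable_condExp.congr hpull) (hS_int.mul_const _) ?_
        filter_upwards [condExp_exp_mul_le hm hY ht htB hB he] with ω hω
        exact mul_le_mul_of_nonneg_left hω (exp_nonneg _)
    _ = exp (t * e + t ^ 2 * B ^ 2) * ∫ ω, exp (t * S ω) ∂μ := by
        rw [integral_mul_const, mul_comm]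

lemma integrable_exp_mul_sum [IsFiniteMeasure μ] {D : ℕ → Ω → ℝ} {B : ℕ → ℝ} {s : Finset ℕ}
    (hD : ∀ j ∈ s, AEMeasurable (D j) μ) (hB : ∀ j ∈ s, ∀ᵐ ω ∂μ, |D j ω| ≤ B j) (t : ℝ) :
    Integrable (fun ω ↦ exp (t * ∑ j ∈ s, D j ω)) μ := by
  refine integrable_exp_mul_of_mem_Icc (s.aemeasurable_fun_sum hD)
    (a := -∑ j ∈ s, B j) (b := ∑ j ∈ s, B j) ?_
  filter_upwards [(eventually_all_finset s).2 hB] with ω hω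
  exact abs_le.1 ((abs_sum_le_sum_abs _ _).trans (sum_le_sum hω))

variable (ℱ : Filtration ℕ m0) {D : ℕ → Ω → ℝ} {B e : ℕ → ℝ} {k : ℕ} {t : ℝ}

lemma integral_exp_mul_sum_Ico_le [IsProbabilityMeasure μ]
    (hD : ∀ j, Measurable[ℱ (j + 1)] (D j)) (ht : 0 ≤ t)
    (hB : ∀ j, k ≤ j → ∀ᵐ ω ∂μ, |D j ω| ≤ B j) (htB : ∀ j, k ≤ j → t * B j ≤ 1)
    (he : ∀ j, k ≤ j → ∀ᵐ ω ∂μ, μ[D j|ℱ j] ω ≤ e j) (N : ℕ) :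
    ∫ ω, exp (t * ∑ j ∈ Ico k N, D j ω) ∂μ ≤ exp (∑ j ∈ Ico k N, (t * e j + t ^ 2 * B j ^ 2)) := by
  induction N with
  | zero => simp
  | succ N ih =>
    rcases lt_or_ge N k with hN | hN
    · simp [Finset.Ico_eq_empty_of_le (show N + 1 ≤ k by omega)]
    have hS : Measurable[ℱ N] fun ω ↦ ∑ j ∈ Ico k N, D j ω :=
      Finset.measurable_fun_sum _ fun j hj ↦ (hD j).mono (ℱ.mono (mem_Ico.1 hj).2) le_rfl
    simp only [sum_Ico_succ_top hN]
    calc ∫ ω, exp (t * (∑ j ∈ Ico k N, D j ω + D N ω)) ∂μ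
        ≤ exp (t * e N + t ^ 2 * B N ^ 2) * ∫ ω, exp (t * ∑ j ∈ Ico k N, D j ω) ∂μ :=
          integral_exp_mul_add_le (ℱ.le N) hS.stronglyMeasurable
            ((hD N).mono (ℱ.le _) le_rfl).aestronglyMeasurable
            (integrable_exp_mul_sum (fun j _ ↦ ((hD j).mono (ℱ.le _) le_rfl).aemeasurable)
              (fun j hj ↦ hB j (mem_Ico.1 hj).1) t)
            ht (htB N hN) (hB N hN) (he N hN)
      _ ≤ exp (t * e N + t ^ 2 * B N ^ 2) * exp (∑ j ∈ Ico k N, (t * e j + t ^ 2 * B j ^ 2)) := by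
          gcongr
      _ = _ := by rw [← exp_add, add_comm]

lemma measure_sum_Ico_ge_le [IsProbabilityMeasure μ]
    (hD : ∀ j, Measurable[ℱ (j + 1)] (D j)) (ht : 0 ≤ t)
    (hB : ∀ j, k ≤ j → ∀ᵐ ω ∂μ, |D j ω| ≤ B j) (htB : ∀ j, k ≤ j → t * B j ≤ 1)
    (he : ∀ j, k ≤ j → ∀ᵐ ω ∂μ, μ[D j|ℱ j] ω ≤ e j) (N : ℕ) (s : ℝ) :
    μ.real {ω | s ≤ ∑ j ∈ Ico k N, D j ω} ≤
      exp (-t * s + ∑ j ∈ Ico k N, (t * e j + t ^ 2 * B j ^ 2)) := by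
  rw [exp_add]
  calc μ.real {ω | s ≤ ∑ j ∈ Ico k N, D j ω}
      ≤ exp (-t * s) * mgf (fun ω ↦ ∑ j ∈ Ico k N, D j ω) μ t :=
        measure_ge_le_exp_mul_mgf s ht <| integrable_exp_mul_sum
          (fun j _ ↦ ((hD j).mono (ℱ.le _) le_rfl).aemeasurable)
          (fun j hj ↦ hB j (mem_Ico.1 hj).1) t
    _ ≤ _ := by gcongr; exact integral_exp_mul_sum_Ico_le ℱ hD ht hB htB he N

end Concentration

lemma exists_noise_sum_ge_of_lt {x γ u : ℕ → ℝ} {g : ℝ → ℝ} {k₀ N : ℕ} {b c δ : ℝ}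
    (hrec : ∀ j, x (j + 1) = x j + γ (j + 1) * (g (x j) + u (j + 1)))
    (hx : ∀ j, x j ∈ Set.Icc (0 : ℝ) 1) (hδ : δ ≤ 2) (hk₀N : k₀ < N)
    (hγ : ∀ j ∈ Ico k₀ N, 0 ≤ γ (j + 1)) (hdrift : ∀ j ∈ Ico k₀ N, γ (j + 1) * g (x j) ≤ δ / 2)
    (hg : ∀ y ∈ Set.Icc (0 : ℝ) 1, b < y → g y ≤ -c) (hsum : 2 ≤ c * ∑ j ∈ Ico k₀ N, γ (j + 1))
    (hxN : b + δ < x N) :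
    ∃ k ∈ Ico k₀ N, δ / 2 ≤ ∑ j ∈ Ico k N, γ (j + 1) * u (j + 1) := by
  have hc : 0 ≤ c := by
    by_contra h
    nlinarith [sum_nonneg hγ]
  have htel : ∀ k ≤ N, x N - x k =
      ∑ j ∈ Ico k N, γ (j + 1) * g (x j) + ∑ j ∈ Ico k N, γ (j + 1) * u (j + 1) := by
    intro k hk
    rw [← sum_Ico_sub x hk, ← sum_add_distrib]
    exact sum_congr rfl fun j _ ↦ by rw [hrec]; ring
  have hdrift_neg : ∀ j ∈ Ico k₀ N, b < x j → γ (j + 1) * g (x j) ≤ -(c * γ (j + 1)) :=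
    fun j hj hbj ↦ by nlinarith [hg _ (hx j) hbj, hγ j hj]
  by_cases hexit : ∃ k ∈ Ico k₀ N, x k ≤ b
  · set S := (Ico k₀ N).filter (x · ≤ b)
    have hS : S.Nonempty := by simpa [S, Finset.filter_nonempty_iff] using hexit
    obtain ⟨hkI, hkb⟩ := mem_filter.1 (S.max'_mem hS)
    set k := S.max' hS
    refine ⟨k, hkI, ?_⟩
    obtain ⟨hk₀k, hkN⟩ := mem_Ico.1 hkI
    have hafter : ∑ j ∈ Ico (k + 1) N, γ (j + 1) * g (x j) ≤ 0 := by
      refine sum_nonpos fun j hj ↦ ?_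
      obtain ⟨hkj, hjN⟩ := mem_Ico.1 hj
      have hjI : j ∈ Ico k₀ N := mem_Ico.2 ⟨by omega, hjN⟩
      have hbj : b < x j := by
        by_contra! h
        have := S.le_max' j (mem_filter.2 ⟨hjI, h⟩)
        omega
      nlinarith [hdrift_neg j hjI hbj, hγ j hjI]
    have := htel k hkN.le
    rw [sum_eq_sum_Ico_succ_bot hkN] at this
    linarith [hdrift k hkI]
  · push Not at hexit
    refine ⟨k₀, mem_Ico.2 ⟨le_rfl, hk₀N⟩, ?_⟩
    have hdown : ∑ j ∈ Ico k₀ N, γ (j + 1) * g (x j) ≤ -2 := by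
      calc ∑ j ∈ Ico k₀ N, γ (j + 1) * g (x j) ≤ ∑ j ∈ Ico k₀ N, -(c * γ (j + 1)) :=
            sum_le_sum fun j hj ↦ hdrift_neg j hj (hexit j hj)
        _ ≤ -2 := by rw [sum_neg_distrib, ← mul_sum]; linarith
    linarith [htel k₀ hk₀N.le, (hx N).1, (hx k₀).2]

structure IsStochasticApproximation {Ω : Type*} {m0 : MeasurableSpace Ω} (ℱ : Filtration ℕ m0)
    (μ : Measure Ω) (X γ U : ℕ → Ω → ℝ) (g : ℝ → ℝ) (ul uu Ku Ke : ℝ) : Prop where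
  adapted_stepSize : ∀ n, Measurable[ℱ n] (γ n)
  adapted_noise : ∀ n, Measurable[ℱ n] (U n)
  step : ∀ n ω, X (n + 1) ω = X n ω + γ (n + 1) ω * (g (X n ω) + U (n + 1) ω)
  stepSize_bounds : ∀ n : ℕ, 1 ≤ n → ∀ᵐ ω ∂μ, ul / n ≤ γ n ω ∧ γ n ω ≤ uu / n
  abs_noise_le : ∀ n, ∀ᵐ ω ∂μ, |U (n + 1) ω| ≤ Ku
  abs_condExp_le : ∀ n : ℕ, 1 ≤ n →
    ∀ᵐ ω ∂μ, |μ[fun ω' ↦ γ (n + 1) ω' * U (n + 1) ω'|ℱ n] ω| ≤ Ke / (n : ℝ) ^ 2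

namespace IsStochasticApproximation

variable {Ω : Type*} {m0 : MeasurableSpace Ω} {ℱ : Filtration ℕ m0} {μ : Measure Ω}
  {X γ U : ℕ → Ω → ℝ} {g : ℝ → ℝ} {ul uu Ku Ke : ℝ}

lemma reflect (h : IsStochasticApproximation ℱ μ X γ U g ul uu Ku Ke) :
    IsStochasticApproximation ℱ μ (fun n ω ↦ 1 - X n ω) γ (fun n ω ↦ -U n ω) (fun y ↦ -g (1 - y))
      ul uu Ku Ke where
  adapted_stepSize := h.adapted_stepSize
  adapted_noise n := (h.adapted_noise n).neg
  step n ω := by simp only [sub_sub_cancel, h.step n ω]; ring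
  stepSize_bounds := h.stepSize_bounds
  abs_noise_le n := by simpa only [abs_neg] using h.abs_noise_le n
  abs_condExp_le n hn := by
    filter_upwards [h.abs_condExp_le n hn,
      condExp_neg (fun ω' ↦ γ (n + 1) ω' * U (n + 1) ω') (ℱ n) (μ := μ)] with ω hω hneg
    simpa only [mul_neg, ← Pi.neg_def, hneg, Pi.neg_apply, abs_neg] using hω

lemma ae_stepSize_bounds (h : IsStochasticApproximation ℱ μ X γ U g ul uu Ku Ke) :
    ∀ᵐ ω ∂μ, ∀ j : ℕ, ul / (j + 1) ≤ γ (j + 1) ω ∧ γ (j + 1) ω ≤ uu / (j + 1) := by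
  rw [ae_all_iff]
  intro j
  simpa using h.stepSize_bounds (j + 1) (by omega)

lemma measure_noise_sum_ge_le [IsProbabilityMeasure μ]
    (h : IsStochasticApproximation ℱ μ X γ U g ul uu Ku Ke) (hul : 0 ≤ ul) (huu : 0 ≤ uu)
    (hKu : 0 ≤ Ku) (hKe : 0 ≤ Ke) {k : ℕ} (hk : 1 ≤ k) {η s : ℝ} (hη : 0 ≤ η)
    (hηC : η * (uu * Ku) ≤ 1) (hηs : 4 * η * (uu * Ku) ^ 2 ≤ s) (N : ℕ) :
    μ {ω | s ≤ ∑ j ∈ Ico k N, γ (j + 1) ω * U (j + 1) ω} ≤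
      ENNReal.ofReal (exp (2 * η * Ke - η * s / 2 * k)) := by
  set C := uu * Ku
  have hk0 : (0 : ℝ) < k := by exact_mod_cast hk
  have hj : ∀ j, k ≤ j → (0 : ℝ) < j := fun j hj ↦ hk0.trans_le (by exact_mod_cast hj)
  have hB : ∀ j, k ≤ j → ∀ᵐ ω ∂μ, |γ (j + 1) ω * U (j + 1) ω| ≤ C / j := by
    intro j hkj
    filter_upwards [h.ae_stepSize_bounds, h.abs_noise_le j] with ω hγ hU
    obtain ⟨hγl, hγu⟩ := hγ j
    have hγ0 : 0 ≤ γ (j + 1) ω := le_trans (by positivity) hγl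
    have := hj j hkj
    rw [abs_mul, abs_of_nonneg hγ0]
    calc γ (j + 1) ω * |U (j + 1) ω| ≤ uu / (j + 1) * Ku := by gcongr
      _ ≤ C / j := by rw [div_mul_eq_mul_div]; gcongr; linarith
  have he : ∀ j, k ≤ j →
      ∀ᵐ ω ∂μ, μ[fun ω' ↦ γ (j + 1) ω' * U (j + 1) ω'|ℱ j] ω ≤ Ke / (j : ℝ) ^ 2 :=
    fun j hkj ↦ (h.abs_condExp_le j (hk.trans hkj)).mono fun _ hω ↦ (le_abs_self _).trans hω
  have htB : ∀ j, k ≤ j → η * k * (C / j) ≤ 1 := fun j hkj ↦ by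
    calc η * k * (C / j) ≤ η * j * (C / j) := by gcongr
      _ = η * C := by field_simp [(hj j hkj).ne']
      _ ≤ 1 := hηC
  have hchernoff := measure_sum_Ico_ge_le ℱ
    (fun j ↦ (h.adapted_stepSize (j + 1)).mul (h.adapted_noise (j + 1))) (by positivity) hB htB he
    N s
  have hsum : ∑ j ∈ Ico k N, (η * k * (Ke / (j : ℝ) ^ 2) + (η * k) ^ 2 * (C / j) ^ 2) ≤
      2 * η * Ke + 2 * η ^ 2 * k * C ^ 2 :=
    calc ∑ j ∈ Ico k N, (η * k * (Ke / (j : ℝ) ^ 2) + (η * k) ^ 2 * (C / j) ^ 2)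
        = (η * k * Ke + (η * k) ^ 2 * C ^ 2) * ∑ j ∈ Ico k N, ((j : ℝ) ^ 2)⁻¹ := by
          rw [mul_sum]; exact sum_congr rfl fun j _ ↦ by ring
      _ ≤ (η * k * Ke + (η * k) ^ 2 * C ^ 2) * (2 / k) := by
          gcongr; exact sum_Ico_inv_sq_le hk
      _ = 2 * η * Ke + 2 * η ^ 2 * k * C ^ 2 := by field_simp
  rw [← ofReal_measureReal]
  have hvar := mul_le_mul_of_nonneg_left hηs (by positivity : 0 ≤ η * k / 2)
  exact ENNReal.ofReal_le_ofReal (hchernoff.trans (exp_le_exp.2 (by nlinarith)))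

lemma measure_lt_le_sum_measure_noise_sum_ge
    (h : IsStochasticApproximation ℱ μ X γ U g ul uu Ku Ke) (hX : ∀ n ω, X n ω ∈ Set.Icc (0 : ℝ) 1)
    (hul : 0 ≤ ul) (huu : 0 ≤ uu) {Kg b c δ : ℝ} (hKg : 0 ≤ Kg)
    (hg_le : ∀ y ∈ Set.Icc (0 : ℝ) 1, g y ≤ Kg) (hg : ∀ y ∈ Set.Icc (0 : ℝ) 1, b < y → g y ≤ -c)
    (hc : 0 ≤ c) (hδ : δ ≤ 2) {k₀ N : ℕ} (hk₀N : k₀ < N) (hdrift : uu * Kg ≤ δ / 2 * (k₀ + 1))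
    (hsum : 2 ≤ c * ul * ∑ j ∈ Ico k₀ N, ((j : ℝ) + 1)⁻¹) :
    μ {ω | b + δ < X N ω} ≤
      ∑ k ∈ Ico k₀ N, μ {ω | δ / 2 ≤ ∑ j ∈ Ico k N, γ (j + 1) ω * U (j + 1) ω} := by
  refine (measure_mono_ae ?_).trans (measure_biUnion_finset_le _ _)
  filter_upwards [h.ae_stepSize_bounds] with ω hγ hω
  have hγ0 : ∀ j, 0 ≤ γ (j + 1) ω := fun j ↦ le_trans (by positivity) (hγ j).1
  have hdrift' : ∀ j ∈ Ico k₀ N, γ (j + 1) ω * g (X j ω) ≤ δ / 2 := fun j hj ↦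
    calc γ (j + 1) ω * g (X j ω) ≤ γ (j + 1) ω * Kg :=
          mul_le_mul_of_nonneg_left (hg_le _ (hX j ω)) (hγ0 j)
      _ ≤ uu / (j + 1) * Kg := mul_le_mul_of_nonneg_right (hγ j).2 hKg
      _ ≤ uu / (k₀ + 1) * Kg := by gcongr; exact_mod_cast (mem_Ico.1 hj).1
      _ ≤ δ / 2 := by rw [div_mul_eq_mul_div, div_le_iff₀ (by positivity)]; exact hdrift
  have hsum' : 2 ≤ c * ∑ j ∈ Ico k₀ N, γ (j + 1) ω := by
    have hγ_sum : ∑ j ∈ Ico k₀ N, ul * ((j : ℝ) + 1)⁻¹ ≤ ∑ j ∈ Ico k₀ N, γ (j + 1) ω :=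
      sum_le_sum fun j _ ↦ by simpa only [div_eq_mul_inv] using (hγ j).1
    calc 2 ≤ c * (ul * ∑ j ∈ Ico k₀ N, ((j : ℝ) + 1)⁻¹) := by rwa [← mul_assoc]
      _ ≤ c * ∑ j ∈ Ico k₀ N, γ (j + 1) ω := by rw [mul_sum]; gcongr
  obtain ⟨k, hk, hnoise⟩ := exists_noise_sum_ge_of_lt (x := (X · ω)) (γ := (γ · ω))
    (u := (U · ω)) (h.step · ω) (hX · ω) hδ hk₀N (fun j _ ↦ hγ0 j) hdrift' hg hsum' hω
  exact Set.mem_iUnion₂.2 ⟨k, hk, hnoise⟩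

lemma measure_lt_le_natCast_mul_exp [IsProbabilityMeasure μ]
    (h : IsStochasticApproximation ℱ μ X γ U g ul uu Ku Ke) (hX : ∀ n ω, X n ω ∈ Set.Icc (0 : ℝ) 1)
    (hul : 0 ≤ ul) (huu : 0 ≤ uu) (hKu : 0 ≤ Ku) (hKe : 0 ≤ Ke) {Kg b c δ η M : ℝ} (hKg : 0 ≤ Kg)
    (hg_le : ∀ y ∈ Set.Icc (0 : ℝ) 1, g y ≤ Kg) (hg : ∀ y ∈ Set.Icc (0 : ℝ) 1, b < y → g y ≤ -c)
    (hc : 0 ≤ c) (hδ : δ ≤ 2) (hη : 0 ≤ η) (hηC : η * (uu * Ku) ≤ 1)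
    (hηδ : 8 * η * (uu * Ku) ^ 2 ≤ δ) (hM : 0 < M) {k₀ n : ℕ} (hk₀ : 1 ≤ k₀) (hk₀n : k₀ ≤ n)
    (hnk₀ : (n : ℝ) ≤ M * k₀) (hdrift : uu * Kg ≤ δ / 2 * (k₀ + 1))
    (hsum : 2 ≤ c * ul * ∑ j ∈ Ico k₀ (n + 1), ((j : ℝ) + 1)⁻¹) :
    μ {ω | b + δ < X (n + 1) ω} ≤ ENNReal.ofReal (n * exp (2 * η * Ke - η * δ / (4 * M) * n)) := by
  have hδ0 : 0 ≤ δ := le_trans (by positivity) hηδ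
  have hwindow : ∀ k ∈ Ico k₀ (n + 1),
      μ {ω | δ / 2 ≤ ∑ j ∈ Ico k (n + 1), γ (j + 1) ω * U (j + 1) ω} ≤
        ENNReal.ofReal (exp (2 * η * Ke - η * δ / (4 * M) * n)) := by
    intro k hk
    have hnk : (n : ℝ) ≤ M * k := hnk₀.trans (by gcongr; exact (mem_Ico.1 hk).1)
    refine (h.measure_noise_sum_ge_le hul huu hKu hKe (hk₀.trans (mem_Ico.1 hk).1) hη hηC
      (by linarith) (n + 1)).trans (ENNReal.ofReal_le_ofReal (exp_le_exp.2 ?_))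
    have : η * δ / (4 * M) * n ≤ η * (δ / 2) / 2 * k := by
      rw [div_mul_eq_mul_div, div_le_iff₀ (by positivity)]
      nlinarith [mul_le_mul_of_nonneg_left hnk (mul_nonneg hη hδ0)]
    linarith
  calc μ {ω | b + δ < X (n + 1) ω}
      ≤ ∑ k ∈ Ico k₀ (n + 1), μ {ω | δ / 2 ≤ ∑ j ∈ Ico k (n + 1), γ (j + 1) ω * U (j + 1) ω} :=
        h.measure_lt_le_sum_measure_noise_sum_ge hX hul huu hKg hg_le hg hc hδ
          (Nat.lt_succ_of_le hk₀n) hdrift hsum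
    _ ≤ ∑ k ∈ Ico k₀ (n + 1), ENNReal.ofReal (exp (2 * η * Ke - η * δ / (4 * M) * n)) :=
        sum_le_sum hwindow
    _ ≤ n * ENNReal.ofReal (exp (2 * η * Ke - η * δ / (4 * M) * n)) := by
        rw [sum_const, nsmul_eq_mul, Nat.card_Ico]
        gcongr
        omega
    _ = _ := by rw [← ENNReal.ofReal_natCast, ← ENNReal.ofReal_mul (by positivity)]

lemma eventually_measure_lt_le_exp [IsProbabilityMeasure μ]
    (h : IsStochasticApproximation ℱ μ X γ U g ul uu Ku Ke) (hX : ∀ n ω, X n ω ∈ Set.Icc (0 : ℝ) 1)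
    (hul : 0 < ul) (huu : 0 ≤ uu) (hKu : 0 ≤ Ku) (hKe : 0 ≤ Ke) {Kg b c δ : ℝ} (hKg : 0 ≤ Kg)
    (hg_le : ∀ y ∈ Set.Icc (0 : ℝ) 1, g y ≤ Kg) (hg : ∀ y ∈ Set.Icc (0 : ℝ) 1, b < y → g y ≤ -c)
    (hc : 0 < c) (hδ : 0 < δ) (hδ2 : δ ≤ 2) :
    ∃ a > 0, ∀ᶠ n : ℕ in atTop, μ {ω | b + δ < X (n + 1) ω} ≤ ENNReal.ofReal (exp (-a * n)) := by
  -- over `[n / M, n]` the drift moves `X` down by at least `c * ul * log (M / 2) = 2`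
  set M := 2 * exp (2 / (c * ul))
  have hM : 2 ≤ M := by linarith [one_le_exp (by positivity : 0 ≤ 2 / (c * ul))]
  -- small enough for `η * (uu * Ku) ≤ 1` and `8 * η * (uu * Ku) ^ 2 ≤ δ`
  set η := δ / (8 * (uu * Ku + 1) ^ 2)
  have hη : η * (8 * (uu * Ku + 1) ^ 2) = δ := div_mul_cancel₀ δ (by positivity)
  have hη0 : 0 < η := by positivity
  set a := η * δ / (4 * M)
  refine ⟨a / 2, by positivity, ?_⟩
  filter_upwards [eventually_ge_atTop ⌈max (2 * M) (2 * uu * Kg * M / δ)⌉₊,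
    eventually_natCast_mul_exp_sub_le (a := a) (by positivity) (2 * η * Ke)] with n hn hexp
  obtain ⟨hnM, hnKg⟩ := max_le_iff.1 (Nat.ceil_le.1 hn)
  obtain ⟨k₀, hk₀, hk₀n, hnk₀, hk₀M⟩ := exists_nat_le_mul_and_mul_succ_le hM hnM
  have hdrift : uu * Kg ≤ δ / 2 * (k₀ + 1) := by
    rw [div_le_iff₀ hδ] at hnKg
    have : 2 * (uu * Kg) * M ≤ δ * k₀ * M := by nlinarith
    nlinarith [le_of_mul_le_mul_right this (by positivity)]
  have hsum : 2 ≤ c * ul * ∑ j ∈ Ico k₀ (n + 1), ((j : ℝ) + 1)⁻¹ := by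
    have hlog : 2 / (c * ul) ≤ ∑ j ∈ Ico k₀ (n + 1), ((j : ℝ) + 1)⁻¹ :=
      calc 2 / (c * ul) = log (M / 2) := by simp [M]
        _ ≤ log ((n + 2) / (k₀ + 1)) := by
          refine log_le_log (by positivity) ?_
          rw [div_le_div_iff₀ two_pos (by positivity)]
          linarith
        _ ≤ _ := by
          convert log_div_le_sum_Ico_inv (by omega : k₀ ≤ n + 1) using 3; push_cast; ring
    rwa [div_le_iff₀' (by positivity)] at hlog
  have hC : 0 ≤ uu * Ku := by positivity
  exact (h.measure_lt_le_natCast_mul_exp hX hul.le huu hKu hKe hKg hg_le hg hc.le hδ2 hη0.le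
    (by nlinarith) (by nlinarith) (by positivity) hk₀ hk₀n hnk₀ hdrift hsum).trans
    (ENNReal.ofReal_le_ofReal hexp)

theorem eventually_measure_sub_gt_le_exp [IsProbabilityMeasure μ]
    (h : IsStochasticApproximation ℱ μ X γ U g ul uu Ku Ke) (hX : ∀ n ω, X n ω ∈ Set.Icc (0 : ℝ) 1)
    (hul : 0 < ul) (huu : 0 ≤ uu) (hKu : 0 ≤ Ku) (hKe : 0 ≤ Ke) {Kg : ℝ} (hKg : 0 ≤ Kg)
    (hg_le : ∀ y ∈ Set.Icc (0 : ℝ) 1, g y ≤ Kg) (hg_anti : AntitoneOn g (Set.Icc 0 1))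
    {xstar : ℝ} (hxs : 0 ≤ xstar) (hg_neg : ∀ y ∈ Set.Icc (0 : ℝ) 1, xstar < y → g y < 0)
    {ε : ℝ} (hε : 0 < ε) :
    ∃ a > 0, ∀ᶠ n : ℕ in atTop,
      μ {ω | X (n + 1) ω - xstar > ε} ≤ ENNReal.ofReal (exp (-a * n)) := by
  rcases le_or_gt 1 (xstar + ε) with hbig | hsmall
  · refine ⟨1, one_pos, .of_forall fun n ↦ ?_⟩
    have : {ω | X (n + 1) ω - xstar > ε} = ∅ := Set.eq_empty_of_forall_notMem fun ω hω ↦ by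
      linarith [(hX (n + 1) ω).2, Set.mem_ofPred_eq ▸ hω]
    simp [this]
  have hb : xstar + ε / 2 ∈ Set.Icc (0 : ℝ) 1 := ⟨by positivity, by linarith⟩
  have hg_b : ∀ y ∈ Set.Icc (0 : ℝ) 1, xstar + ε / 2 < y → g y ≤ -(-g (xstar + ε / 2)) :=
    fun y hy hby ↦ by simpa using hg_anti hb hy hby.le
  obtain ⟨a, ha, hev⟩ := h.eventually_measure_lt_le_exp (δ := ε / 2) hX hul huu hKu hKe hKg hg_le
    hg_b (neg_pos.2 (hg_neg _ hb (by linarith))) (by positivity) (by linarith)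
  refine ⟨a, ha, hev.mono fun n hn ↦ le_of_eq_of_le ?_ hn⟩
  congr; ext ω; constructor <;> intro <;> linarith

end IsStochasticApproximation

theorem sa_large_deviation_bounded_general
    {Ω : Type*} {m0 : MeasurableSpace Ω} {ℙ : Measure Ω} [IsProbabilityMeasure ℙ]
    (ℱ : Filtration ℕ m0)
    (X γ U : ℕ → Ω → ℝ) (g : ℝ → ℝ)
    (hγ_meas : ∀ n : ℕ, Measurable[ℱ n] (γ n))
    (hU_meas : ∀ n : ℕ, Measurable[ℱ n] (U n))
    (hrec : ∀ (n : ℕ) ω, X (n + 1) ω = X n ω + γ (n + 1) ω * (g (X n ω) + U (n + 1) ω))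
    (ul uu Ku Ke : ℝ) (hul : 0 < ul) (huu : 0 < uu) (hKu : 0 < Ku) (hKe : 0 < Ke)
    (hγ_bound : ∀ n : ℕ, 1 ≤ n → ∀ᵐ ω ∂ℙ, ul / n ≤ γ n ω ∧ γ n ω ≤ uu / n)
    (hU_bound : ∀ n : ℕ, ∀ᵐ ω ∂ℙ, |U (n + 1) ω| ≤ Ku)
    (hcond : ∀ n : ℕ, 1 ≤ n →
      ∀ᵐ ω ∂ℙ, |(ℙ[fun ω' => γ (n + 1) ω' * U (n + 1) ω' | ℱ n]) ω| ≤ Ke / (n : ℝ) ^ 2)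
    (hXmem : ∀ (n : ℕ) (ω : Ω), X n ω ∈ Set.Icc (0:ℝ) 1)
    (Kg : ℝ) (hKg : 0 < Kg) (hg_bdd : ∀ x ∈ Set.Icc (0:ℝ) 1, |g x| ≤ Kg)
    (hg_anti : AntitoneOn g (Set.Icc 0 1))
    (xstar : ℝ) (hxs_mem : xstar ∈ Set.Icc (0:ℝ) 1)
    (hg_pos : ∀ x ∈ Set.Icc (0:ℝ) 1, x < xstar → 0 < g x)
    (hg_neg : ∀ x ∈ Set.Icc (0:ℝ) 1, xstar < x → g x < 0) :
    ∀ ε > (0:ℝ), ∃ a > (0:ℝ), ∀ᶠ n in atTop,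
      ℙ {ω | |X (n + 1) ω - xstar| > ε} ≤ ENNReal.ofReal (2 * Real.exp (-a * n)) := by
  intro ε hε
  have hSA : IsStochasticApproximation ℱ ℙ X γ U g ul uu Ku Ke :=
    ⟨hγ_meas, hU_meas, hrec, hγ_bound, hU_bound, hcond⟩
  obtain ⟨a₁, ha₁, h₁⟩ := hSA.eventually_measure_sub_gt_le_exp hXmem hul huu.le hKu.le hKe.le
    hKg.le (fun y hy ↦ (abs_le.1 (hg_bdd y hy)).2) hg_anti hxs_mem.1 hg_neg hε
  have hI : ∀ y ∈ Set.Icc (0 : ℝ) 1, 1 - y ∈ Set.Icc (0 : ℝ) 1 := fun _ ↦ Set.Icc.one_sub_mem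
  obtain ⟨a₂, ha₂, h₂⟩ := hSA.reflect.eventually_measure_sub_gt_le_exp (xstar := 1 - xstar)
    (fun n ω ↦ hI _ (hXmem n ω)) hul huu.le hKu.le hKe.le hKg.le
    (fun y hy ↦ by linarith [(abs_le.1 (hg_bdd _ (hI y hy))).1])
    (fun y hy z hz hyz ↦ neg_le_neg (hg_anti (hI z hz) (hI y hy) (by linarith)))
    (by linarith [hxs_mem.2]) (fun y hy hxy ↦ neg_neg_of_pos (hg_pos _ (hI y hy) (by linarith))) hε
  refine ⟨min a₁ a₂, lt_min ha₁ ha₂, ?_⟩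
  filter_upwards [h₁, h₂] with n hn₁ hn₂
  calc ℙ {ω | |X (n + 1) ω - xstar| > ε}
      ≤ ℙ ({ω | X (n + 1) ω - xstar > ε} ∪ {ω | 1 - X (n + 1) ω - (1 - xstar) > ε}) :=
        measure_mono fun ω hω ↦ by
          rcases lt_abs.1 (show ε < |X (n + 1) ω - xstar| from hω) with h | h
          exacts [Or.inl h, Or.inr (by simp only [Set.mem_ofPred_eq]; linarith)]
    _ ≤ ENNReal.ofReal (exp (-a₁ * n)) + ENNReal.ofReal (exp (-a₂ * n)) :=
        (measure_union_le _ _).trans (add_le_add hn₁ hn₂)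
    _ ≤ ENNReal.ofReal (2 * exp (-min a₁ a₂ * n)) := by
        rw [two_mul, ENNReal.ofReal_add (exp_nonneg _) (exp_nonneg _)]
        gcongr
        exacts [min_le_left _ _, min_le_right _ _]

/-- Large deviation inequality for a bounded stochastic approximation algorithm on [0,1]. -/
theorem sa_large_deviation_bounded
    {Ω : Type*} {m0 : MeasurableSpace Ω} {ℙ : Measure Ω} [IsProbabilityMeasure ℙ]
    (ℱ : Filtration ℕ m0)
    (X γ U : ℕ → Ω → ℝ) (g : ℝ → ℝ) (x0 : ℝ)
    (hX_meas : ∀ n : ℕ, Measurable[ℱ n] (X n))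
    (hγ_meas : ∀ n : ℕ, Measurable[ℱ n] (γ n))
    (hU_meas : ∀ n : ℕ, Measurable[ℱ n] (U n))
    (hX0 : ∀ ω, X 0 ω = x0)
    (hrec : ∀ (n : ℕ) ω, X (n + 1) ω = X n ω + γ (n + 1) ω * (g (X n ω) + U (n + 1) ω))
    (ul uu Ku Ke : ℝ) (hul : 0 < ul) (huu : 0 < uu) (hKu : 0 < Ku) (hKe : 0 < Ke)
    (hγ_bound : ∀ n : ℕ, 1 ≤ n → ∀ᵐ ω ∂ℙ, ul / n ≤ γ n ω ∧ γ n ω ≤ uu / n)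
    (hU_bound : ∀ n : ℕ, ∀ᵐ ω ∂ℙ, |U (n + 1) ω| ≤ Ku)
    (hcond : ∀ n : ℕ, 1 ≤ n →
      ∀ᵐ ω ∂ℙ, |(ℙ[fun ω' => γ (n + 1) ω' * U (n + 1) ω' | ℱ n]) ω| ≤ Ke / (n : ℝ) ^ 2)
    (hXmem : ∀ (n : ℕ) (ω : Ω), X n ω ∈ Set.Icc (0:ℝ) 1)
    (Kg : ℝ) (hKg : 0 < Kg) (hg_bdd : ∀ x ∈ Set.Icc (0:ℝ) 1, |g x| ≤ Kg)
    (hg_anti : AntitoneOn g (Set.Icc 0 1))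
    (hg_cont : ContinuousOn g (Set.Icc 0 1))
    (xstar : ℝ) (hxs_mem : xstar ∈ Set.Icc (0:ℝ) 1) (hxs_zero : g xstar = 0)
    (hxs_uniq : ∀ x ∈ Set.Icc (0:ℝ) 1, g x = 0 → x = xstar)
    (hg_pos : ∀ x ∈ Set.Icc (0:ℝ) 1, x < xstar → 0 < g x)
    (hg_neg : ∀ x ∈ Set.Icc (0:ℝ) 1, xstar < x → g x < 0) :
    ∀ ε > (0:ℝ), ∃ a > (0:ℝ), ∀ᶠ n in atTop,
      ℙ {ω | |X (n + 1) ω - xstar| > ε} ≤ ENNReal.ofReal (2 * Real.exp (-a * n)) :=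
  sa_large_deviation_bounded_general ℱ X γ U g hγ_meas hU_meas hrec ul uu Ku Ke hul huu hKu hKe
    hγ_bound hU_bound hcond hXmem Kg hKg hg_bdd hg_anti xstar hxs_mem hg_pos hg_neg
end

section
/- Let (X_n)_{n≥0} be a real-valued stochastic approximation algorithm, let g : ℝ → ℝ be non-increasing with a zero x* such that g(x) > 0 for x < x* and g(x) < 0 for x > x*, and suppose the limit K_{gl} := −lim_{x→+∞} g(x) exists, is finite and positive. If K_{gl} > K_u, then for every ε > 0 there exists a constant a > 0, independent of n, such that for all sufficiently large n, ℙ(X_{n+1} − x* > ε) ≤ e^{−a n}. -/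
/-!
Because `K_gl > K_u`, the drift `g + U` is negative beyond some level `M`, and `g` is bounded
above along every path: below a point where `g ≥ K_u` a path only moves up, and one step moves it
down by at most `u_u (K_gl + K_u)`. Hence all paths stay below a deterministic level `B` and move
up by at most `C / (k + 1)` at step `k`.

Split `γ_{k+1} U_{k+1} = W_k + V_k` with `W_k = 𝔼[γ_{k+1} U_{k+1} | ℱ_k] = O(1/k²)`, so that `V_k`
is a martingale difference of size `O(1/k)`. Put `s = x* + ε/2` and `m = ⌈δ n⌉`. If
`X_{n+1} > x* + ε`, either the path is below `s` at some time in `[m, n]`, and after the last such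
time the drift is `≤ 0`, so the martingale increments after it sum to at least `ε/4`; or the path
stays above `s` on `[m, n]`, where the drift pushes it down by at least
`|g s| u_l ∑_{k=m}^{n} 1/(k+1) ≈ |g s| u_l log(1/δ)`, more than `B - s` for small `δ`, and again
only the martingale can compensate. By Azuma–Hoeffding each of these `n + 1` events has
probability `≤ exp(-c m)`, and `m ≥ δ n`.
-/

open MeasureTheory Filter Set

open Real
open ProbabilityTheory (mgf measure_ge_le_exp_mul_mgf integrable_exp_mul_of_mem_Icc)

theorem exp_mul_le_cosh_add_sinh_div_mul {v c l : ℝ} (hc : 0 < c) (hv : |v| ≤ c) :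
    exp (l * v) ≤ cosh (l * c) + sinh (l * c) / c * v := by
  obtain ⟨hvl, hvu⟩ := abs_le.mp hv
  have hconv := convexOn_exp.2 (mem_univ (l * -c)) (mem_univ (l * c))
    (div_nonneg (by linarith) (by linarith) : 0 ≤ (c - v) / (2 * c))
    (div_nonneg (by linarith) (by linarith) : 0 ≤ (c + v) / (2 * c))
    (by field_simp; ring)
  have hmid : ((c - v) / (2 * c)) • (l * -c) + ((c + v) / (2 * c)) • (l * c) = l * v := by
    simp only [smul_eq_mul]; field_simp; ring
  have hend : ((c - v) / (2 * c)) • exp (l * -c) + ((c + v) / (2 * c)) • exp (l * c) =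
      cosh (l * c) + sinh (l * c) / c * v := by
    rw [cosh_eq, sinh_eq, smul_eq_mul, smul_eq_mul, mul_neg]
    generalize exp (l * c) = a
    generalize exp (-(l * c)) = b
    field_simp; ring
  rwa [hmid, hend] at hconv

theorem sum_Ico_inv_sq_le_s2 {a b : ℕ} (ha : 1 ≤ a) :
    ∑ k ∈ Finset.Ico a b, 1 / (k : ℝ) ^ 2 ≤ 2 / (a : ℝ) := by
  rcases le_or_gt a b with hab | hba
  · have hstep : ∀ k ∈ Finset.Ico a b, 1 / (k : ℝ) ^ 2 ≤ -(2 / (k + 1 : ℕ)) - -(2 / k) := by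
      intro k hk
      have hk : (1 : ℝ) ≤ k := by exact_mod_cast ha.trans (Finset.mem_Ico.1 hk).1
      rw [Nat.cast_succ, neg_sub_neg, div_sub_div _ _ (by positivity) (by positivity),
        div_le_div_iff₀ (by positivity) (by positivity)]
      nlinarith
    calc _ ≤ _ := Finset.sum_le_sum hstep
      _ = 2 / a - 2 / b := by rw [Finset.sum_Ico_sub (fun k => -(2 / (k : ℝ))) hab]; ring
      _ ≤ 2 / a := sub_le_self _ (by positivity)
  · rw [Finset.Ico_eq_empty_of_le hba.le, Finset.sum_empty]
    positivity

theorem log_sub_log_le_sum_Ico_inv {a b : ℕ} (hab : a ≤ b) :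
    log (b + 1) - log (a + 1) ≤ ∑ k ∈ Finset.Ico a b, 1 / ((k : ℝ) + 1) := by
  rw [← Finset.sum_Ico_sub (fun k => log ((k : ℝ) + 1)) hab]
  refine Finset.sum_le_sum fun k _ => ?_
  rw [Nat.cast_succ, ← log_div (by positivity) (by positivity)]
  calc log (((k : ℝ) + 1 + 1) / (k + 1)) ≤ ((k : ℝ) + 1 + 1) / (k + 1) - 1 :=
        log_le_sub_one_of_pos (by positivity)
    _ = 1 / ((k : ℝ) + 1) := by field_simp; ring

theorem exists_le_sum_Ico_ceil_mul (L : ℝ) :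
    ∃ δ ∈ Ioo (0 : ℝ) 1, ∀ᶠ n : ℕ in atTop,
      L ≤ ∑ k ∈ Finset.Ico ⌈δ * n⌉₊ (n + 1), 1 / ((k : ℝ) + 1) := by
  have h2δ : 0 < exp (-|L|) := exp_pos _
  have hδ1 : exp (-|L|) ≤ 1 := exp_le_one_iff.2 (neg_nonpos.2 (abs_nonneg L))
  refine ⟨exp (-|L|) / 2, ⟨by positivity, by linarith⟩, ?_⟩
  filter_upwards [tendsto_natCast_atTop_atTop.eventually_ge_atTop (4 / exp (-|L|))] with n hn
  rw [div_le_iff₀ h2δ] at hn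
  have hceil := Nat.ceil_lt_add_one (by positivity : 0 ≤ exp (-|L|) / 2 * n)
  have hmn : ⌈exp (-|L|) / 2 * n⌉₊ ≤ n + 1 := Nat.ceil_le.2 (by push_cast; nlinarith)
  have hm : (⌈exp (-|L|) / 2 * n⌉₊ : ℝ) + 1 ≤ exp (-|L|) * (n + 2) := by nlinarith
  calc L ≤ log (n + 2) - log (exp (-|L|) * (n + 2)) := by
        rw [log_mul h2δ.ne' (by positivity), log_exp]; linarith [le_abs_self L]
    _ ≤ log (n + 2) - log (⌈exp (-|L|) / 2 * n⌉₊ + 1) := by gcongr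
    _ ≤ _ := by
        have := log_sub_log_le_sum_Ico_inv hmn
        push_cast at this
        rwa [add_assoc, one_add_one_eq_two] at this

theorem eventually_natCast_add_one_le_exp_mul {a : ℝ} (ha : 0 < a) :
    ∀ᶠ n : ℕ in atTop, (n : ℝ) + 1 ≤ exp (a * n) := by
  filter_upwards [tendsto_natCast_atTop_atTop.eventually_ge_atTop (2 / a ^ 2)] with n hn
  have hquad := quadratic_le_exp_of_nonneg (by positivity : 0 ≤ a * n)
  rw [div_le_iff₀ (by positivity)] at hn
  nlinarith [sq_nonneg a]

theorem eventually_natCast_add_one_mul_exp_le {κ δ : ℝ} (hκ : 0 < κ) (hδ : 0 < δ) :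
    ∀ᶠ n : ℕ in atTop, (n + 1) * exp (-κ * ⌈δ * n⌉₊) ≤ exp (-(κ * δ / 2) * n) := by
  filter_upwards [eventually_natCast_add_one_le_exp_mul (half_pos (mul_pos hκ hδ))] with n hn
  calc (n + 1) * exp (-κ * ⌈δ * n⌉₊) ≤ exp (κ * δ / 2 * n) * exp (-κ * (δ * n)) := by
        refine mul_le_mul hn (exp_le_exp.2 ?_) (exp_pos _).le (exp_pos _).le
        nlinarith [Nat.le_ceil (δ * n)]
    _ = exp (-(κ * δ / 2) * n) := by rw [← exp_add]; ring_nf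

section Azuma

variable {Ω : Type*} {m0 : MeasurableSpace Ω} {μ : Measure Ω}

/-- Conditional Hoeffding lemma, from the chord bound for the convex function `exp`. -/
theorem condExp_exp_mul_le_of_abs_le [IsFiniteMeasure μ] {m : MeasurableSpace Ω} (hm : m ≤ m0)
    {V : Ω → ℝ} (hV : AEMeasurable V μ) {c : ℝ} (hc : 0 < c) (hVc : ∀ᵐ ω ∂μ, |V ω| ≤ c)
    (hV0 : μ[V|m] =ᵐ[μ] 0) (l : ℝ) :
    μ[fun ω => exp (l * V ω)|m] ≤ᵐ[μ] fun _ => exp (l ^ 2 * c ^ 2 / 2) := by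
  have hVIcc : ∀ᵐ ω ∂μ, V ω ∈ Icc (-c) c := by
    filter_upwards [hVc] with ω hω using abs_le.mp hω
  have hVint : Integrable V μ := Integrable.of_mem_Icc _ _ hV hVIcc
  have hchord : μ[fun ω => exp (l * V ω)|m] ≤ᵐ[μ]
      μ[(fun _ => cosh (l * c)) + (sinh (l * c) / c) • V|m] :=
    condExp_mono (integrable_exp_mul_of_mem_Icc hV hVIcc)
      ((integrable_const _).add (hVint.smul _))
      (by filter_upwards [hVc] with ω hω using exp_mul_le_cosh_add_sinh_div_mul hc hω)
  have hlin : μ[(fun _ => cosh (l * c)) + (sinh (l * c) / c) • V|m] =ᵐ[μ]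
      fun _ => cosh (l * c) := by
    filter_upwards [condExp_add (integrable_const _) (hVint.smul (sinh (l * c) / c)) m,
      condExp_smul (sinh (l * c) / c) V m, hV0] with ω hadd hsmul h0
    rw [hadd, Pi.add_apply, hsmul, Pi.smul_apply, h0, condExp_const hm]
    simp
  filter_upwards [hchord, hlin] with ω h1 h2
  calc _ ≤ cosh (l * c) := h1.trans h2.le
    _ ≤ exp ((l * c) ^ 2 / 2) := cosh_le_exp_half_sq _
    _ = exp (l ^ 2 * c ^ 2 / 2) := by rw [mul_pow]

theorem condExp_sub_condExp_ae_eq_zero [IsFiniteMeasure μ] {m : MeasurableSpace Ω}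
    (hm : m ≤ m0) {Z : Ω → ℝ} (hZ : Integrable Z μ) : μ[Z - μ[Z|m]|m] =ᵐ[μ] 0 := by
  filter_upwards [condExp_sub hZ integrable_condExp m] with ω hω
  rw [hω, condExp_of_stronglyMeasurable hm stronglyMeasurable_condExp integrable_condExp]
  simp

variable {V : ℕ → Ω → ℝ} {c : ℕ → ℝ} {a b : ℕ}

theorem integrable_exp_mul_sum_Ico [IsFiniteMeasure μ] (hV : ∀ k, AEMeasurable (V k) μ)
    (hVc : ∀ k, a ≤ k → ∀ᵐ ω ∂μ, |V k ω| ≤ c k) (l : ℝ) (n : ℕ) :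
    Integrable (fun ω => exp (l * ∑ k ∈ Finset.Ico a n, V k ω)) μ := by
  refine integrable_exp_mul_of_mem_Icc (a := -∑ k ∈ Finset.Ico a n, c k)
    (b := ∑ k ∈ Finset.Ico a n, c k) (Finset.aemeasurable_fun_sum _ fun k _ => hV k) ?_
  filter_upwards [ae_all_iff.2 fun k => ae_all_iff.2 (hVc k)] with ω hω
  exact abs_le.1 <| (Finset.abs_sum_le_sum_abs _ _).trans
    (Finset.sum_le_sum fun k hk => hω k (Finset.mem_Ico.1 hk).1)

variable [IsProbabilityMeasure μ] (ℱ : Filtration ℕ m0)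

theorem integral_exp_mul_sum_Ico_le_s2 (hV : ∀ k, StronglyMeasurable[ℱ (k + 1)] (V k))
    (hc : ∀ k, a ≤ k → 0 < c k) (hVc : ∀ k, a ≤ k → ∀ᵐ ω ∂μ, |V k ω| ≤ c k)
    (hV0 : ∀ k, a ≤ k → μ[V k|ℱ k] =ᵐ[μ] 0) (l : ℝ) (hab : a ≤ b) :
    ∫ ω, exp (l * ∑ k ∈ Finset.Ico a b, V k ω) ∂μ ≤
      exp (l ^ 2 * (∑ k ∈ Finset.Ico a b, c k ^ 2) / 2) := by
  have hS : ∀ b, StronglyMeasurable[ℱ b] fun ω => ∑ k ∈ Finset.Ico a b, V k ω := fun b =>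
    Finset.stronglyMeasurable_fun_sum _ fun k hk => (hV k).mono (ℱ.mono (Finset.mem_Ico.1 hk).2)
  have hexpS : ∀ b, StronglyMeasurable[ℱ b] fun ω => exp (l * ∑ k ∈ Finset.Ico a b, V k ω) :=
    fun b => (continuous_exp.comp (continuous_const_mul l)).comp_stronglyMeasurable (hS b)
  have hintS := integrable_exp_mul_sum_Ico
    (fun k => ((hV k).mono (ℱ.le (k + 1))).measurable.aemeasurable) hVc l
  induction b, hab using Nat.le_induction with
  | base => simp
  | succ b hab ih =>
    have hVb : AEMeasurable (V b) μ := ((hV b).mono (ℱ.le (b + 1))).measurable.aemeasurable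
    have hintV : Integrable (fun ω => exp (l * V b ω)) μ :=
      integrable_exp_mul_of_mem_Icc hVb
        (by filter_upwards [hVc b hab] with ω hω using abs_le.1 hω)
    have hsplit : (fun ω => exp (l * ∑ k ∈ Finset.Ico a (b + 1), V k ω)) =
        (fun ω => exp (l * ∑ k ∈ Finset.Ico a b, V k ω)) * fun ω => exp (l * V b ω) := by
      ext ω; simp only [Finset.sum_Ico_succ_top hab, mul_add, exp_add, Pi.mul_apply]
    have hcond := condExp_exp_mul_le_of_abs_le (ℱ.le b) hVb (hc b hab) (hVc b hab) (hV0 b hab) l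
    calc ∫ ω, exp (l * ∑ k ∈ Finset.Ico a (b + 1), V k ω) ∂μ
        = ∫ ω, (μ[(fun ω => exp (l * ∑ k ∈ Finset.Ico a b, V k ω)) *
            fun ω => exp (l * V b ω)|ℱ b]) ω ∂μ := by
          rw [hsplit, integral_condExp (ℱ.le b)]
      _ = ∫ ω, exp (l * ∑ k ∈ Finset.Ico a b, V k ω) * (μ[fun ω => exp (l * V b ω)|ℱ b]) ω ∂μ :=
          integral_congr_ae (condExp_mul_of_stronglyMeasurable_left (hexpS b)
            (hsplit ▸ hintS (b + 1)) hintV)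
      _ ≤ ∫ ω, exp (l * ∑ k ∈ Finset.Ico a b, V k ω) * exp (l ^ 2 * c b ^ 2 / 2) ∂μ := by
          refine integral_mono_of_nonneg ?_ ((hintS b).mul_const _) ?_
          · filter_upwards [condExp_nonneg (μ := μ) (m := ℱ b)
              (Eventually.of_forall fun ω => (exp_pos (l * V b ω)).le)] with ω hω
            exact mul_nonneg (exp_pos _).le hω
          · filter_upwards [hcond] with ω hω
            exact mul_le_mul_of_nonneg_left hω (exp_pos _).le
      _ = (∫ ω, exp (l * ∑ k ∈ Finset.Ico a b, V k ω) ∂μ) * exp (l ^ 2 * c b ^ 2 / 2) :=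
          integral_mul_const _ _
      _ ≤ exp (l ^ 2 * (∑ k ∈ Finset.Ico a b, c k ^ 2) / 2) * exp (l ^ 2 * c b ^ 2 / 2) := by
          gcongr
      _ = exp (l ^ 2 * (∑ k ∈ Finset.Ico a (b + 1), c k ^ 2) / 2) := by
          rw [← exp_add, Finset.sum_Ico_succ_top hab]; ring_nf

/-- **Azuma–Hoeffding inequality**. -/
theorem measure_le_sum_Ico_le (hV : ∀ k, StronglyMeasurable[ℱ (k + 1)] (V k))
    (hc : ∀ k, a ≤ k → 0 < c k) (hVc : ∀ k, a ≤ k → ∀ᵐ ω ∂μ, |V k ω| ≤ c k)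
    (hV0 : ∀ k, a ≤ k → μ[V k|ℱ k] =ᵐ[μ] 0) (hab : a < b) {t : ℝ} (ht : 0 ≤ t) :
    μ {ω | t ≤ ∑ k ∈ Finset.Ico a b, V k ω} ≤
      ENNReal.ofReal (exp (-t ^ 2 / (2 * ∑ k ∈ Finset.Ico a b, c k ^ 2))) := by
  set s := ∑ k ∈ Finset.Ico a b, c k ^ 2
  have hs : 0 < s := Finset.sum_pos (fun k hk => pow_pos (hc k (Finset.mem_Ico.1 hk).1) 2)
    ⟨a, Finset.mem_Ico.2 ⟨le_rfl, hab⟩⟩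
  rw [← ofReal_measureReal]
  refine ENNReal.ofReal_le_ofReal ?_
  calc μ.real {ω | t ≤ ∑ k ∈ Finset.Ico a b, V k ω}
      ≤ exp (-(t / s) * t) * mgf (fun ω => ∑ k ∈ Finset.Ico a b, V k ω) μ (t / s) :=
        measure_ge_le_exp_mul_mgf t (by positivity) (integrable_exp_mul_sum_Ico
          (fun k => ((hV k).mono (ℱ.le (k + 1))).measurable.aemeasurable) hVc _ _)
    _ ≤ exp (-(t / s) * t) * exp ((t / s) ^ 2 * s / 2) :=
        mul_le_mul_of_nonneg_left (integral_exp_mul_sum_Ico_le_s2 ℱ hV hc hVc hV0 _ hab.le)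
          (exp_pos _).le
    _ = exp (-t ^ 2 / (2 * s)) := by rw [← exp_add]; congr 1; field_simp; ring

theorem measure_le_sum_Ico_le_of_abs_le_div (hV : ∀ k, StronglyMeasurable[ℱ (k + 1)] (V k))
    {C : ℝ} (hC : 0 < C) (hVc : ∀ k, 1 ≤ k → ∀ᵐ ω ∂μ, |V k ω| ≤ C / k)
    (hV0 : ∀ k, 1 ≤ k → μ[V k|ℱ k] =ᵐ[μ] 0) (ha : 1 ≤ a) (hab : a < b) {t : ℝ} (ht : 0 ≤ t) :
    μ {ω | t ≤ ∑ k ∈ Finset.Ico a b, V k ω} ≤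
      ENNReal.ofReal (exp (-(t ^ 2 / (4 * C ^ 2)) * a)) := by
  have hc : ∀ k, a ≤ k → 0 < C / k := fun k hk => div_pos hC (by exact_mod_cast ha.trans hk)
  refine (measure_le_sum_Ico_le ℱ hV hc (fun k hk => hVc k (ha.trans hk))
    (fun k hk => hV0 k (ha.trans hk)) hab ht).trans (ENNReal.ofReal_le_ofReal (exp_le_exp.2 ?_))
  set s := ∑ k ∈ Finset.Ico a b, (C / k) ^ 2
  have hs0 : 0 < s := Finset.sum_pos (fun k hk => pow_pos (hc k (Finset.mem_Ico.1 hk).1) 2)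
    ⟨a, Finset.mem_Ico.2 ⟨le_rfl, hab⟩⟩
  have hs : s * a ≤ 2 * C ^ 2 := by
    have ha' : (0 : ℝ) < a := by exact_mod_cast ha
    calc s * a = C ^ 2 * (∑ k ∈ Finset.Ico a b, 1 / (k : ℝ) ^ 2) * a := by
          rw [Finset.mul_sum]; congr 1; exact Finset.sum_congr rfl fun k _ => by ring
      _ ≤ C ^ 2 * (2 / a) * a := by gcongr; exact sum_Ico_inv_sq_le_s2 ha
      _ = 2 * C ^ 2 := by field_simp
  rw [neg_div, neg_mul, neg_le_neg_iff, div_mul_eq_mul_div,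
    div_le_div_iff₀ (by positivity) (by positivity)]
  nlinarith [mul_le_mul_of_nonneg_left hs (sq_nonneg t)]

theorem measure_exists_le_sum_Ico_le (hV : ∀ k, StronglyMeasurable[ℱ (k + 1)] (V k))
    {C : ℝ} (hC : 0 < C) (hVc : ∀ k, 1 ≤ k → ∀ᵐ ω ∂μ, |V k ω| ≤ C / k)
    (hV0 : ∀ k, 1 ≤ k → μ[V k|ℱ k] =ᵐ[μ] 0) {m : ℕ} (hm : 1 ≤ m) (n : ℕ) {t : ℝ} (ht : 0 ≤ t) :
    μ {ω | ∃ j ∈ Finset.Icc m n, t ≤ ∑ k ∈ Finset.Ico j (n + 1), V k ω} ≤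
      ENNReal.ofReal ((n + 1) * exp (-(t ^ 2 / (4 * C ^ 2)) * m)) := by
  calc μ {ω | ∃ j ∈ Finset.Icc m n, t ≤ ∑ k ∈ Finset.Ico j (n + 1), V k ω}
      ≤ μ (⋃ j ∈ Finset.Icc m n, {ω | t ≤ ∑ k ∈ Finset.Ico j (n + 1), V k ω}) :=
        measure_mono fun ω ⟨j, hj, h⟩ => mem_biUnion hj h
    _ ≤ ∑ j ∈ Finset.Icc m n, μ {ω | t ≤ ∑ k ∈ Finset.Ico j (n + 1), V k ω} :=
        measure_biUnion_finset_le _ _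
    _ ≤ ∑ j ∈ Finset.Icc m n, ENNReal.ofReal (exp (-(t ^ 2 / (4 * C ^ 2)) * m)) := by
        refine Finset.sum_le_sum fun j hj => ?_
        obtain ⟨hmj, hjn⟩ := Finset.mem_Icc.1 hj
        refine (measure_le_sum_Ico_le_of_abs_le_div ℱ hV hC hVc hV0 (hm.trans hmj)
          (Nat.lt_succ_of_le hjn) ht).trans (ENNReal.ofReal_le_ofReal (exp_le_exp.2 ?_))
        have : (m : ℝ) ≤ j := by exact_mod_cast hmj
        nlinarith [div_nonneg (sq_nonneg t) (by positivity : (0 : ℝ) ≤ 4 * C ^ 2)]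
    _ ≤ ENNReal.ofReal ((n + 1) * exp (-(t ^ 2 / (4 * C ^ 2)) * m)) := by
        rw [Finset.sum_const, nsmul_eq_mul, Nat.card_Icc, ← ENNReal.ofReal_natCast,
          ← ENNReal.ofReal_mul (Nat.cast_nonneg _)]
        refine ENNReal.ofReal_le_ofReal (mul_le_mul_of_nonneg_right ?_ (exp_pos _).le)
        exact_mod_cast Nat.sub_le _ _

theorem measure_exists_le_sum_Ico_sub_condExp_le {Z : ℕ → Ω → ℝ}
    (hZ : ∀ k, StronglyMeasurable[ℱ (k + 1)] (Z k)) {A B : ℝ} (hA : 0 ≤ A) (hB : 0 < B)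
    (hZA : ∀ k, ∀ᵐ ω ∂μ, |Z k ω| ≤ A / (k + 1))
    (hZB : ∀ k, 1 ≤ k → ∀ᵐ ω ∂μ, |μ[Z k|ℱ k] ω| ≤ B / k ^ 2) {m : ℕ} (hm : 1 ≤ m) (n : ℕ)
    {t : ℝ} (ht : 0 ≤ t) :
    μ {ω | ∃ j ∈ Finset.Icc m n, t ≤ ∑ k ∈ Finset.Ico j (n + 1), (Z k ω - μ[Z k|ℱ k] ω)} ≤
      ENNReal.ofReal ((n + 1) * exp (-(t ^ 2 / (4 * (A + B) ^ 2)) * m)) := by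
  refine measure_exists_le_sum_Ico_le ℱ (V := fun k => Z k - μ[Z k|ℱ k])
    (fun k => (hZ k).sub (stronglyMeasurable_condExp.mono (ℱ.mono k.le_succ))) (by linarith)
    (fun k hk => ?_) (fun k _ => ?_) hm n ht
  · have hk' : (1 : ℝ) ≤ k := by exact_mod_cast hk
    filter_upwards [hZA k, hZB k hk] with ω hZ hW
    calc |Z k ω - μ[Z k|ℱ k] ω| ≤ A / (k + 1) + B / k ^ 2 := (abs_sub _ _).trans (add_le_add hZ hW)
      _ ≤ A / k + B / k := by gcongr <;> nlinarith
      _ = (A + B) / k := (add_div _ _ _).symm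
  · exact condExp_sub_condExp_ae_eq_zero (ℱ.le k) (Integrable.of_bound
      ((hZ k).mono (ℱ.le (k + 1))).aestronglyMeasurable _ (hZA k))

end Azuma

theorem le_max_of_succ_le_add {x : ℕ → ℝ} {M C : ℝ} (hC : ∀ k, x (k + 1) ≤ x k + C)
    (hM : ∀ k, M ≤ x k → x (k + 1) ≤ x k) (k : ℕ) : x k ≤ max (x 0) (M + C) := by
  induction k with
  | zero => exact le_max_left _ _
  | succ k ih =>
    rcases le_or_gt M (x k) with h | h
    · exact (hM k h).trans ih
    · exact (hC k).trans ((add_le_add_left h.le C).trans (le_max_right _ _))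

/-- `γ k` and `u k` play the roles of `γ_{k+1}` and `U_{k+1}`. -/
structure IsSAPath (g : ℝ → ℝ) (uu Ku : ℝ) (x γ u : ℕ → ℝ) : Prop where
  succ_eq : ∀ k, x (k + 1) = x k + γ k * (g (x k) + u k)
  step_nonneg : ∀ k, 0 ≤ γ k
  step_le : ∀ k, γ k ≤ uu / (k + 1)
  abs_noise_le : ∀ k, |u k| ≤ Ku

namespace IsSAPath

variable {g : ℝ → ℝ} {uu Ku : ℝ} {x γ u : ℕ → ℝ} (h : IsSAPath g uu Ku x γ u)
include h

theorem step_le_const (k : ℕ) : γ k ≤ uu := by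
  have huu : 0 ≤ uu := by simpa using (h.step_nonneg 0).trans (h.step_le 0)
  exact (h.step_le k).trans (div_le_self huu (by linarith [(Nat.cast_nonneg k : (0 : ℝ) ≤ k)]))

theorem abs_mul_noise_le (k : ℕ) : |γ k * u k| ≤ uu * Ku / (k + 1) := by
  rw [abs_mul, abs_of_nonneg (h.step_nonneg k), mul_div_right_comm]
  exact mul_le_mul (h.step_le k) (h.abs_noise_le k) (abs_nonneg _)
    ((h.step_nonneg k).trans (h.step_le k))

theorem le_succ_of_le_apply (hg : Antitone g) {x₁ : ℝ} (hx₁ : Ku ≤ g x₁) {k : ℕ}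
    (hk : x k ≤ x₁) : x k ≤ x (k + 1) := by
  have := (abs_le.1 (h.abs_noise_le k)).1
  have := hg hk
  rw [h.succ_eq k]; nlinarith [h.step_nonneg k]

theorem sub_le_succ {K : ℝ} (hK : 0 ≤ K) (hgK : ∀ y, -K ≤ g y) (k : ℕ) :
    x k - uu * (K + Ku) ≤ x (k + 1) := by
  have hKu : 0 ≤ Ku := (abs_nonneg _).trans (h.abs_noise_le k)
  have := (abs_le.1 (h.abs_noise_le k)).1
  have := hgK (x k)
  rw [h.succ_eq k]
  nlinarith [mul_nonneg (h.step_nonneg k) (by linarith : 0 ≤ g (x k) + u k + (K + Ku)),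
    mul_nonneg (sub_nonneg.2 (h.step_le_const k)) (by linarith : 0 ≤ K + Ku)]

theorem min_le (hg : Antitone g) {K : ℝ} (hK : 0 ≤ K) (hgK : ∀ y, -K ≤ g y) {x₁ : ℝ}
    (hx₁ : Ku ≤ g x₁) (k : ℕ) : min (x 0) (x₁ - uu * (K + Ku)) ≤ x k := by
  have key := le_max_of_succ_le_add (x := fun k => -x k) (M := -x₁) (C := uu * (K + Ku))
    (fun k => by linarith [h.sub_le_succ hK hgK k])
    (fun k hk => neg_le_neg (h.le_succ_of_le_apply hg hx₁ (neg_le_neg_iff.1 hk))) k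
  rcases le_max_iff.1 key with h | h
  · exact min_le_of_left_le (by linarith)
  · exact min_le_of_right_le (by linarith)

theorem succ_sub_le {G : ℝ} (hG : ∀ k, g (x k) ≤ G) (hGKu : 0 ≤ G + Ku) (k : ℕ) :
    x (k + 1) - x k ≤ uu * (G + Ku) / (k + 1) := by
  have := (abs_le.1 (h.abs_noise_le k)).2
  have := hG k
  rw [h.succ_eq k, add_sub_cancel_left, mul_div_right_comm]
  nlinarith [h.step_nonneg k, h.step_le k]

theorem succ_le_of_le {M : ℝ} (hM : ∀ y, M ≤ y → g y ≤ -Ku) {k : ℕ} (hk : M ≤ x k) :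
    x (k + 1) ≤ x k := by
  have := (abs_le.1 (h.abs_noise_le k)).2
  have := hM _ hk
  rw [h.succ_eq k]; nlinarith [h.step_nonneg k]

end IsSAPath

theorem exists_forall_isSAPath_apply_le {g : ℝ → ℝ} (hg : Antitone g) {K : ℝ} (hK : 0 ≤ K)
    (hgK : ∀ y, -K ≤ g y) (uu Ku x₀ : ℝ) :
    ∃ G, Ku ≤ G ∧ ∀ x γ u, IsSAPath g uu Ku x γ u → x 0 = x₀ → ∀ k, g (x k) ≤ G := by
  by_cases hx₁ : ∃ x₁, Ku ≤ g x₁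
  · obtain ⟨x₁, hx₁⟩ := hx₁
    refine ⟨max (g (min x₀ (x₁ - uu * (K + Ku)))) Ku, le_max_right _ _, ?_⟩
    intro x γ u h hx0 k
    exact (hg (hx0 ▸ h.min_le hg hK hgK hx₁ k)).trans (le_max_left _ _)
  · simp only [not_exists, not_le] at hx₁
    exact ⟨Ku, le_rfl, fun x γ u _ _ k => (hx₁ _).le⟩

theorem exists_forall_isSAPath_le {g : ℝ → ℝ} (hg : Antitone g) {K Ku : ℝ}
    (hlim : Tendsto g atTop (nhds (-K))) (hKu : Ku < K) (hKu₀ : 0 ≤ Ku) {uu : ℝ} (huu : 0 ≤ uu)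
    (x₀ : ℝ) :
    ∃ B C, 0 ≤ C ∧ ∀ x γ u, IsSAPath g uu Ku x γ u → x 0 = x₀ →
      ∀ k, x k ≤ B ∧ x (k + 1) - x k ≤ C / (k + 1) := by
  obtain ⟨M, hM⟩ := eventually_atTop.1 (hlim.eventually_le_const (neg_lt_neg hKu))
  obtain ⟨G, hG, hgG⟩ := exists_forall_isSAPath_apply_le hg (hKu₀.trans hKu.le)
    (fun y => hg.le_of_tendsto hlim y) uu Ku x₀
  have hC : 0 ≤ uu * (G + Ku) := mul_nonneg huu (by linarith)
  refine ⟨max x₀ (M + uu * (G + Ku)), uu * (G + Ku), hC, fun x γ u h hx0 k => ⟨?_, ?_⟩⟩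
  · have hinc := h.succ_sub_le (hgG x γ u h hx0) (by linarith)
    rw [← hx0]
    refine le_max_of_succ_le_add (fun k => ?_) (fun k hk => h.succ_le_of_le hM hk) k
    linarith [hinc k, div_le_self hC (by linarith [(Nat.cast_nonneg k : (0 : ℝ) ≤ k)] :
      (1 : ℝ) ≤ k + 1)]
  · exact h.succ_sub_le (hgG x γ u h hx0) (by linarith) k

section Escape

variable {g : ℝ → ℝ} {x γ w v : ℕ → ℝ}

theorem sum_Ico_eq_of_succ_eq (hrec : ∀ k, x (k + 1) = x k + γ k * g (x k) + w k + v k)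
    {j b : ℕ} (hjb : j ≤ b) :
    ∑ k ∈ Finset.Ico j b, v k = x b - x j - ∑ k ∈ Finset.Ico j b, γ k * g (x k) -
      ∑ k ∈ Finset.Ico j b, w k := by
  have hv : ∀ k, v k = (x (k + 1) - x k) - γ k * g (x k) - w k := fun k => by rw [hrec]; ring
  rw [Finset.sum_congr rfl fun k _ => hv k, Finset.sum_sub_distrib, Finset.sum_sub_distrib,
    Finset.sum_Ico_sub x hjb]

theorem abs_sum_Ico_le_of_abs_le_div_sq {Ke : ℝ} (hKe : 0 ≤ Ke)
    (hw : ∀ k, 1 ≤ k → |w k| ≤ Ke / k ^ 2) {j : ℕ} (hj : 1 ≤ j) (b : ℕ) :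
    |∑ k ∈ Finset.Ico j b, w k| ≤ 2 * Ke / j := by
  calc |∑ k ∈ Finset.Ico j b, w k| ≤ ∑ k ∈ Finset.Ico j b, Ke * (1 / (k : ℝ) ^ 2) :=
        (Finset.abs_sum_le_sum_abs _ _).trans (Finset.sum_le_sum fun k hk => by
          rw [mul_one_div]; exact hw k (hj.trans (Finset.mem_Ico.1 hk).1))
    _ ≤ Ke * (2 / j) := by
        rw [← Finset.mul_sum]; exact mul_le_mul_of_nonneg_left (sum_Ico_inv_sq_le_s2 hj) hKe
    _ = 2 * Ke / j := by ring

theorem sum_Ico_mul_apply_le (hg : Antitone g) {s ul : ℝ} (hgs : g s ≤ 0) (hul : 0 ≤ ul)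
    (hγ : ∀ k, ul / (k + 1) ≤ γ k) {j b : ℕ} (hx : ∀ k ∈ Finset.Ico j b, s ≤ x k) :
    ∑ k ∈ Finset.Ico j b, γ k * g (x k) ≤
      g s * ul * ∑ k ∈ Finset.Ico j b, 1 / ((k : ℝ) + 1) := by
  rw [Finset.mul_sum]
  refine Finset.sum_le_sum fun k hk => ?_
  have hgx := hg (hx k hk)
  calc γ k * g (x k) ≤ ul / (k + 1) * g (x k) :=
        mul_le_mul_of_nonpos_right (hγ k) (hgx.trans hgs)
    _ ≤ ul / (k + 1) * g s := mul_le_mul_of_nonneg_left hgx (by positivity)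
    _ = g s * ul * (1 / (k + 1)) := by ring

theorem exists_le_sum_Ico_of_lt (hrec : ∀ k, x (k + 1) = x k + γ k * g (x k) + w k + v k)
    (hg : Antitone g) {s ε ul Ke B C : ℝ} (hgs : g s < 0) (hul : 0 ≤ ul) (hKe : 0 ≤ Ke)
    (hC : 0 ≤ C) (hγ : ∀ k, ul / (k + 1) ≤ γ k) (hw : ∀ k, 1 ≤ k → |w k| ≤ Ke / k ^ 2)
    (hB : ∀ k, x k ≤ B) (hinc : ∀ k, x (k + 1) - x k ≤ C / (k + 1)) {m n : ℕ} (hm : 1 ≤ m)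
    (hmn : m ≤ n) (hmε : (C + 2 * Ke) / m ≤ ε / 2)
    (hH : B - s + 2 * Ke ≤ -g s * ul * ∑ k ∈ Finset.Ico m (n + 1), 1 / ((k : ℝ) + 1))
    (hxn : s + ε < x (n + 1)) :
    ∃ j ∈ Finset.Icc m n, ε / 2 ≤ ∑ k ∈ Finset.Ico j (n + 1), v k := by
  classical
  have hm' : (0 : ℝ) < m := by exact_mod_cast hm
  have hε : 0 ≤ ε := by linarith [(by positivity : 0 ≤ (C + 2 * Ke) / m)]
  have hw_sum : ∀ j, m ≤ j → ∑ k ∈ Finset.Ico j (n + 1), w k ≤ 2 * Ke / m := fun j hj =>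
    (le_abs_self _).trans ((abs_sum_Ico_le_of_abs_le_div_sq hKe hw (hm.trans hj) _).trans
      (div_le_div_of_nonneg_left (by positivity) hm' (by exact_mod_cast hj)))
  by_cases hlow : ∃ T, T ≤ n ∧ m ≤ T ∧ x T ≤ s
  · -- `T` is the last time in `[m, n]` at which the path is below `s`
    obtain ⟨T₀, hT₀n, hT₀⟩ := hlow
    set T := Nat.findGreatest (fun T => m ≤ T ∧ x T ≤ s) n
    obtain ⟨hmT, hxT⟩ : m ≤ T ∧ x T ≤ s :=
      Nat.findGreatest_spec (P := fun T => m ≤ T ∧ x T ≤ s) hT₀n hT₀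
    have hTn : T ≤ n := Nat.findGreatest_le n
    have hxT1 : x (T + 1) ≤ s + C / m := by
      have := div_le_div_of_nonneg_left hC hm' (by exact_mod_cast hmT.trans (Nat.le_succ T) :
        (m : ℝ) ≤ T + 1)
      linarith [hinc T]
    have hCm : C / m ≤ ε / 2 := le_trans (by gcongr; linarith) hmε
    have : 0 ≤ C / m := by positivity
    have hTn' : T < n := by
      refine lt_of_le_of_ne hTn fun hTeq => ?_
      rw [hTeq] at hxT1
      linarith
    refine ⟨T + 1, Finset.mem_Icc.2 ⟨by omega, hTn'⟩, ?_⟩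
    have habove : ∀ k ∈ Finset.Ico (T + 1) (n + 1), s ≤ x k := fun k hk => by
      obtain ⟨hTk, hkn⟩ := Finset.mem_Ico.1 hk
      by_contra hxk
      exact Nat.findGreatest_is_greatest hTk (by omega) ⟨by omega, (not_le.1 hxk).le⟩
    have hdrift : ∑ k ∈ Finset.Ico (T + 1) (n + 1), γ k * g (x k) ≤ 0 :=
      (sum_Ico_mul_apply_le hg hgs.le hul hγ habove).trans <|
        mul_nonpos_of_nonpos_of_nonneg (mul_nonpos_of_nonpos_of_nonneg hgs.le hul)
          (Finset.sum_nonneg fun k _ => by positivity)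
    rw [sum_Ico_eq_of_succ_eq hrec (by omega)]
    have := hw_sum (T + 1) (by omega)
    have : C / m + 2 * Ke / m ≤ ε / 2 := by rw [← add_div]; exact hmε
    linarith
  · simp only [not_exists, not_and, not_le] at hlow
    refine ⟨m, Finset.mem_Icc.2 ⟨le_rfl, hmn⟩, ?_⟩
    have hdrift := sum_Ico_mul_apply_le hg hgs.le hul hγ (j := m) (b := n + 1) fun k hk =>
      (hlow k (by have := (Finset.mem_Ico.1 hk).2; omega) (Finset.mem_Ico.1 hk).1).le
    rw [sum_Ico_eq_of_succ_eq hrec (by omega)]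
    have := hw_sum m le_rfl
    have : 2 * Ke / m ≤ 2 * Ke := div_le_self (by positivity) (by exact_mod_cast hm)
    linarith [hB m]

end Escape

theorem exists_forall_le_sum_Ico_ceil_mul {g : ℝ → ℝ} (hg : Antitone g) {s ε ul Ke B C : ℝ}
    (hgs : g s < 0) (hε : 0 < ε) (hul : 0 < ul) (hKe : 0 ≤ Ke) (hC : 0 ≤ C) :
    ∃ δ > (0 : ℝ), ∀ᶠ n : ℕ in atTop, ∀ x γ w v : ℕ → ℝ,
      (∀ k, x (k + 1) = x k + γ k * g (x k) + w k + v k) → (∀ k, x k ≤ B) →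
      (∀ k, x (k + 1) - x k ≤ C / (k + 1)) → (∀ k, ul / (k + 1) ≤ γ k) →
      (∀ k, 1 ≤ k → |w k| ≤ Ke / k ^ 2) → s + ε < x (n + 1) →
      ∃ j ∈ Finset.Icc ⌈δ * n⌉₊ n, ε / 2 ≤ ∑ k ∈ Finset.Ico j (n + 1), v k := by
  have hdrift : 0 < -g s * ul := mul_pos (neg_pos.2 hgs) hul
  obtain ⟨δ, ⟨hδ, hδ1⟩, hH⟩ := exists_le_sum_Ico_ceil_mul ((B - s + 2 * Ke) / (-g s * ul))
  refine ⟨δ, hδ, ?_⟩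
  filter_upwards [hH, (tendsto_natCast_atTop_atTop.const_mul_atTop hδ).eventually_ge_atTop
    (max 1 (2 * (C + 2 * Ke) / ε))] with n hH hn x γ w v hrec hB hinc hγ hw hxn
  have hm : δ * n ≤ ⌈δ * n⌉₊ := Nat.le_ceil _
  have hm1 : (1 : ℝ) ≤ ⌈δ * n⌉₊ := (le_max_left _ _).trans (hn.trans hm)
  refine exists_le_sum_Ico_of_lt hrec hg hgs hul.le hKe hC hγ hw hB hinc (by exact_mod_cast hm1)
    (Nat.ceil_le.2 (mul_le_of_le_one_left n.cast_nonneg hδ1.le)) ?_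
    ((div_le_iff₀ hdrift).1 hH |>.trans_eq (mul_comm _ _)) hxn
  rw [div_le_iff₀ (by linarith)]
  have := (le_max_right _ _).trans (hn.trans hm)
  rw [div_le_iff₀ hε] at this
  linarith

theorem exists_forall_isSAPath_le_sum_Ico {g : ℝ → ℝ} (hg : Antitone g) {K Ku : ℝ}
    (hlim : Tendsto g atTop (nhds (-K))) (hKu : Ku < K) (hKu₀ : 0 ≤ Ku) {xstar : ℝ}
    (hneg : ∀ y, xstar < y → g y < 0) {ul uu Ke : ℝ} (hul : 0 < ul) (huu : 0 ≤ uu)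
    (hKe : 0 ≤ Ke) (x₀ : ℝ) {ε : ℝ} (hε : 0 < ε) :
    ∃ δ > (0 : ℝ), ∀ᶠ n : ℕ in atTop, ∀ x γ u w v : ℕ → ℝ, IsSAPath g uu Ku x γ u →
      x 0 = x₀ → (∀ k, ul / (k + 1) ≤ γ k) → (∀ k, γ k * u k = w k + v k) →
      (∀ k, 1 ≤ k → |w k| ≤ Ke / k ^ 2) → xstar + ε < x (n + 1) →
      ∃ j ∈ Finset.Icc ⌈δ * n⌉₊ n, ε / 4 ≤ ∑ k ∈ Finset.Ico j (n + 1), v k := by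
  obtain ⟨B, C, hC, hbound⟩ := exists_forall_isSAPath_le hg hlim hKu hKu₀ huu x₀
  obtain ⟨δ, hδ, hesc⟩ := exists_forall_le_sum_Ico_ceil_mul (B := B) hg
    (hneg (xstar + ε / 2) (by linarith)) (half_pos hε) hul hKe hC
  refine ⟨δ, hδ, ?_⟩
  filter_upwards [hesc] with n hesc x γ u w v h hx0 hγ hwv hw hxn
  have := hesc x γ w v (fun k => by rw [h.succ_eq k, mul_add, hwv k]; ring)
    (fun k => (hbound x γ u h hx0 k).1) (fun k => (hbound x γ u h hx0 k).2) hγ hw (by linarith)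
  rwa [div_div, show (2 : ℝ) * 2 = 4 by norm_num] at this

theorem ae_isSAPath {Ω : Type*} {m0 : MeasurableSpace Ω} {μ : Measure Ω} {X γ U : ℕ → Ω → ℝ}
    {g : ℝ → ℝ} (hrec : ∀ n ω, X (n + 1) ω = X n ω + γ (n + 1) ω * (g (X n ω) + U (n + 1) ω))
    {ul uu Ku : ℝ} (hul : 0 ≤ ul) (hγ : ∀ n : ℕ, 1 ≤ n → ∀ᵐ ω ∂μ, ul / n ≤ γ n ω ∧ γ n ω ≤ uu / n)
    (hU : ∀ n, ∀ᵐ ω ∂μ, |U (n + 1) ω| ≤ Ku) :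
    ∀ᵐ ω ∂μ, IsSAPath g uu Ku (X · ω) (fun k => γ (k + 1) ω) (fun k => U (k + 1) ω) ∧
      ∀ k : ℕ, ul / (k + 1) ≤ γ (k + 1) ω := by
  have hγ' : ∀ᵐ ω ∂μ, ∀ k : ℕ, ul / (k + 1) ≤ γ (k + 1) ω ∧ γ (k + 1) ω ≤ uu / (k + 1) :=
    ae_all_iff.2 fun k => by simpa using hγ (k + 1) (by omega)
  filter_upwards [hγ', ae_all_iff.2 hU] with ω hγω hUω
  exact ⟨⟨fun k => hrec k ω, fun k => (by positivity : 0 ≤ ul / (k + 1)).trans (hγω k).1,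
    fun k => (hγω k).2, hUω⟩, fun k => (hγω k).1⟩

theorem sa_upper_tail_large_Kgl_general
    {Ω : Type*} {m0 : MeasurableSpace Ω} {ℙ : Measure Ω} [IsProbabilityMeasure ℙ]
    (ℱ : Filtration ℕ m0)
    (X γ U : ℕ → Ω → ℝ) (g : ℝ → ℝ) (x0 : ℝ)
    (hγ_meas : ∀ n : ℕ, Measurable[ℱ n] (γ n))
    (hU_meas : ∀ n : ℕ, Measurable[ℱ n] (U n))
    (hX0 : ∀ ω, X 0 ω = x0)
    (hrec : ∀ (n : ℕ) ω, X (n + 1) ω = X n ω + γ (n + 1) ω * (g (X n ω) + U (n + 1) ω))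
    (ul uu Ku Ke : ℝ) (hul : 0 < ul) (huu : 0 < uu) (hKu : 0 < Ku) (hKe : 0 < Ke)
    (hγ_bound : ∀ n : ℕ, 1 ≤ n → ∀ᵐ ω ∂ℙ, ul / n ≤ γ n ω ∧ γ n ω ≤ uu / n)
    (hU_bound : ∀ n : ℕ, ∀ᵐ ω ∂ℙ, |U (n + 1) ω| ≤ Ku)
    (hcond : ∀ n : ℕ, 1 ≤ n →
      ∀ᵐ ω ∂ℙ, |(ℙ[fun ω' => γ (n + 1) ω' * U (n + 1) ω' | ℱ n]) ω| ≤ Ke / (n : ℝ) ^ 2)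
    (hg_anti : Antitone g)
    (xstar : ℝ)
    (hg_neg : ∀ x, xstar < x → g x < 0)
    (Kgl : ℝ)
    (hlim : Tendsto g atTop (nhds (-Kgl)))
    (hcase : Ku < Kgl) :
    ∀ ε > (0:ℝ), ∃ a > (0:ℝ), ∀ᶠ n in atTop,
      ℙ {ω | X (n + 1) ω - xstar > ε} ≤ ENNReal.ofReal (Real.exp (-a * n)) := by
  intro ε hε
  obtain ⟨δ, hδ, hesc⟩ := exists_forall_isSAPath_le_sum_Ico hg_anti hlim hcase hKu.le hg_neg hul
    huu.le hKe.le x0 hε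
  have hpath := ae_isSAPath hrec hul.le hγ_bound hU_bound
  set κ := (ε / 4) ^ 2 / (4 * (uu * Ku + Ke) ^ 2)
  refine ⟨κ * δ / 2, by positivity, ?_⟩
  filter_upwards [hesc, eventually_ge_atTop 1,
    eventually_natCast_add_one_mul_exp_le (by positivity : 0 < κ) hδ] with n hesc hn hexp
  calc ℙ {ω | X (n + 1) ω - xstar > ε}
      ≤ ℙ {ω | ∃ j ∈ Finset.Icc ⌈δ * n⌉₊ n, ε / 4 ≤ ∑ k ∈ Finset.Ico j (n + 1),
          (γ (k + 1) ω * U (k + 1) ω - ℙ[fun ω => γ (k + 1) ω * U (k + 1) ω|ℱ k] ω)} := by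
        refine measure_mono_ae ?_
        filter_upwards [hpath, ae_all_iff.2 fun k => ae_all_iff.2 (hcond k)] with ω ⟨h, hγ⟩ hW hX
        exact hesc _ _ _ _ _ h (hX0 ω) hγ (fun k => by ring) hW
          (by linarith [show X (n + 1) ω - xstar > ε from hX])
    _ ≤ ENNReal.ofReal ((n + 1) * exp (-κ * ⌈δ * n⌉₊)) :=
        measure_exists_le_sum_Ico_sub_condExp_le ℱ
          (fun k => ((hγ_meas _).mul (hU_meas _)).stronglyMeasurable) (by positivity) hKe
          (fun k => by filter_upwards [hpath] with ω ⟨h, _⟩ using h.abs_mul_noise_le k) hcond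
          (Nat.one_le_ceil_iff.2 (by positivity)) n (by positivity)
    _ ≤ ENNReal.ofReal (exp (-(κ * δ / 2) * n)) := ENNReal.ofReal_le_ofReal hexp

/-- Upper large deviation inequality for an unbounded stochastic approximation
algorithm in the case K_{gl} > K_u. -/
theorem sa_upper_tail_large_Kgl
    {Ω : Type*} {m0 : MeasurableSpace Ω} {ℙ : Measure Ω} [IsProbabilityMeasure ℙ]
    (ℱ : Filtration ℕ m0)
    (X γ U : ℕ → Ω → ℝ) (g : ℝ → ℝ) (x0 : ℝ)
    (hX_meas : ∀ n : ℕ, Measurable[ℱ n] (X n))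
    (hγ_meas : ∀ n : ℕ, Measurable[ℱ n] (γ n))
    (hU_meas : ∀ n : ℕ, Measurable[ℱ n] (U n))
    (hX0 : ∀ ω, X 0 ω = x0)
    (hrec : ∀ (n : ℕ) ω, X (n + 1) ω = X n ω + γ (n + 1) ω * (g (X n ω) + U (n + 1) ω))
    (ul uu Ku Ke : ℝ) (hul : 0 < ul) (huu : 0 < uu) (hKu : 0 < Ku) (hKe : 0 < Ke)
    (hγ_bound : ∀ n : ℕ, 1 ≤ n → ∀ᵐ ω ∂ℙ, ul / n ≤ γ n ω ∧ γ n ω ≤ uu / n)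
    (hU_bound : ∀ n : ℕ, ∀ᵐ ω ∂ℙ, |U (n + 1) ω| ≤ Ku)
    (hcond : ∀ n : ℕ, 1 ≤ n →
      ∀ᵐ ω ∂ℙ, |(ℙ[fun ω' => γ (n + 1) ω' * U (n + 1) ω' | ℱ n]) ω| ≤ Ke / (n : ℝ) ^ 2)
    (hg_anti : Antitone g)
    (xstar : ℝ) (hxs_zero : g xstar = 0)
    (hg_pos : ∀ x < xstar, 0 < g x) (hg_neg : ∀ x, xstar < x → g x < 0)
    (Kgl : ℝ) (hKgl : 0 < Kgl)
    (hlim : Tendsto g atTop (nhds (-Kgl)))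
    (hcase : Ku < Kgl) :
    ∀ ε > (0:ℝ), ∃ a > (0:ℝ), ∀ᶠ n in atTop,
      ℙ {ω | X (n + 1) ω - xstar > ε} ≤ ENNReal.ofReal (Real.exp (-a * n)) :=
  sa_upper_tail_large_Kgl_general ℱ X γ U g x0 hγ_meas hU_meas hX0 hrec ul uu Ku Ke hul huu hKu hKe
    hγ_bound hU_bound hcond hg_anti xstar hg_neg Kgl hlim hcase
end

section
/- The set Θ* := {y ∈ [0,1] : h(y) = 0} of equilibrium points of h is non-empty, and every y* ∈ Θ* belongs to the interval I* := [min(H^{11}/H_1, H^{12}/H_2), max(H^{11}/H_1, H^{12}/H_2)]. -/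
open MeasureTheory Filter Set

/-- The set Θ* of equilibrium points of h is non-empty and contained in I*. -/
theorem equilibrium_set_nonempty_and_subset
    (H11 H12 H21 H22 : ℝ)
    (hH11 : 0 ≤ H11) (hH22 : 0 ≤ H22) (hH12 : 0 < H12) (hH21 : 0 < H21)
    (H1 H2 : ℝ) (hH1 : H1 = H11 + H21) (hH2 : H2 = H12 + H22) (hHne : H1 ≠ H2)
    (f : ℝ → ℝ)
    (hf_cont : ContinuousOn f (Set.Icc 0 1))
    (hf_mono : MonotoneOn f (Set.Icc 0 1))
    (hf_diff : DifferentiableOn ℝ f (Set.Icc 0 1))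
    (hf0 : f 0 = 0) (hf1 : f 1 = 1)
    (hf_pos : ∀ x ∈ Set.Ioc (0:ℝ) 1, 0 < f x)
    (h : ℝ → ℝ)
    (hh : ∀ y, h y =
      ((H11 - y * H1) * f y + (H12 - y * H2) * f (1 - y)) / (f y + f (1 - y))) :
    {y ∈ Set.Icc (0:ℝ) 1 | h y = 0}.Nonempty ∧
      {y ∈ Set.Icc (0:ℝ) 1 | h y = 0} ⊆
        Set.Icc (min (H11 / H1) (H12 / H2)) (max (H11 / H1) (H12 / H2)) := by
  have hH1pos : 0 < H1 := by rw [hH1]; linarith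
  have hH2pos : 0 < H2 := by rw [hH2]; linarith
  have hfnn : ∀ x ∈ Set.Icc (0:ℝ) 1, 0 ≤ f x := by
    intro x hx
    have := hf_mono (Set.left_mem_Icc.mpr zero_le_one) hx hx.1
    linarith
  have hmem : ∀ y ∈ Set.Icc (0:ℝ) 1, (1 - y) ∈ Set.Icc (0:ℝ) 1 := by
    intro y hy
    exact ⟨by linarith [hy.2], by linarith [hy.1]⟩
  have hD : ∀ y ∈ Set.Icc (0:ℝ) 1, 0 < f y + f (1 - y) := by
    intro y hy
    rcases eq_or_lt_of_le hy.1 with h0 | h0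
    · rw [← h0]; norm_num [hf0, hf1]
    · have h1 : 0 < f y := hf_pos y ⟨h0, hy.2⟩
      have h2 : 0 ≤ f (1 - y) := hfnn _ (hmem y hy)
      linarith
  have hc2 : ContinuousOn (fun y => f (1 - y)) (Set.Icc (0:ℝ) 1) :=
    hf_cont.comp (Continuous.continuousOn (by continuity)) (fun y hy => hmem y hy)
  have hcont : ContinuousOn h (Set.Icc 0 1) := by
    have hN : ContinuousOn (fun y => ((H11 - y * H1) * f y + (H12 - y * H2) * f (1 - y)))
        (Set.Icc (0:ℝ) 1) := by
      apply ContinuousOn.add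
      · exact ((Continuous.continuousOn (by continuity)).mul hf_cont)
      · exact ((Continuous.continuousOn (by continuity)).mul hc2)
    have hq := hN.div (hf_cont.add hc2) (fun y hy => (hD y hy).ne')
    exact hq.congr (fun y _ => hh y)
  have hh0 : h 0 = H12 := by rw [hh]; norm_num [hf0, hf1]
  have hh1 : h 1 = H11 - H1 := by rw [hh]; norm_num [hf0, hf1]
  constructor
  · have h0mem : (0:ℝ) ∈ Set.Icc (h 1) (h 0) :=
      ⟨by rw [hh1]; linarith, by rw [hh0]; linarith⟩
    obtain ⟨y, hy, hyeq⟩ := intermediate_value_Icc' zero_le_one hcont h0mem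
    exact ⟨y, hy, hyeq⟩
  · rintro y ⟨hy, heq⟩
    have hnum : (H11 - y * H1) * f y + (H12 - y * H2) * f (1 - y) = 0 := by
      rcases div_eq_zero_iff.mp (by rw [← hh y]; exact heq) with h' | h'
      · exact h'
      · exact absurd h' (hD y hy).ne'
    have ha1 : H11 / H1 < 1 := by
      rw [div_lt_one hH1pos]; linarith
    constructor
    · by_contra hlt
      push_neg at hlt
      have hya : y < H11 / H1 := lt_of_lt_of_le hlt (min_le_left _ _)
      have hyb : y < H12 / H2 := lt_of_lt_of_le hlt (min_le_right _ _)
      have h1' : 0 < H11 - y * H1 := by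
        have := (lt_div_iff₀ hH1pos).mp hya; linarith
      have h2' : 0 < H12 - y * H2 := by
        have := (lt_div_iff₀ hH2pos).mp hyb; linarith
      have hy1 : y < 1 := lt_trans hya ha1
      have hfy : 0 ≤ f y := hfnn y hy
      have hf1y : 0 < f (1 - y) := hf_pos _ ⟨by linarith, by linarith [hy.1]⟩
      nlinarith
    · by_contra hlt
      push_neg at hlt
      have hya : H11 / H1 < y := lt_of_le_of_lt (le_max_left _ _) hlt
      have hyb : H12 / H2 < y := lt_of_le_of_lt (le_max_right _ _) hlt
      have h1' : H11 - y * H1 < 0 := by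
        have := (div_lt_iff₀ hH1pos).mp hya; linarith
      have h2' : H12 - y * H2 < 0 := by
        have := (div_lt_iff₀ hH2pos).mp hyb; linarith
      have hy0 : 0 < y := lt_of_le_of_lt (div_nonneg hH11 hH1pos.le) hya
      have hfy : 0 < f y := hf_pos y ⟨hy0, hy.2⟩
      have hf1y : 0 ≤ f (1 - y) := hfnn _ (hmem y hy)
      nlinarith
end

section
/- If H^{11}/H_1 ≤ H^{12}/H_2, then h has exactly one zero in the interval I* := [min(H^{11}/H_1, H^{12}/H_2), max(H^{11}/H_1, H^{12}/H_2)]. -/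
open MeasureTheory Filter Set

/-- If H11/H1 ≤ H12/H2 then h has exactly one zero in I*. -/
theorem unique_zero_of_le
    (H11 H12 H21 H22 : ℝ)
    (hH11 : 0 ≤ H11) (hH22 : 0 ≤ H22) (hH12 : 0 < H12) (hH21 : 0 < H21)
    (H1 H2 : ℝ) (hH1 : H1 = H11 + H21) (hH2 : H2 = H12 + H22) (hHne : H1 ≠ H2)
    (f : ℝ → ℝ)
    (hf_cont : ContinuousOn f (Set.Icc 0 1))
    (hf_mono : MonotoneOn f (Set.Icc 0 1))
    (hf_diff : DifferentiableOn ℝ f (Set.Icc 0 1))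
    (hf0 : f 0 = 0) (hf1 : f 1 = 1)
    (hf_pos : ∀ x ∈ Set.Ioc (0:ℝ) 1, 0 < f x)
    (h : ℝ → ℝ)
    (hh : ∀ y, h y =
      ((H11 - y * H1) * f y + (H12 - y * H2) * f (1 - y)) / (f y + f (1 - y)))
    (hle : H11 / H1 ≤ H12 / H2) :
    ∃! y : ℝ, y ∈ Set.Icc (min (H11 / H1) (H12 / H2)) (max (H11 / H1) (H12 / H2)) ∧
      h y = 0 := by
  have hH1pos : 0 < H1 := by rw [hH1]; linarith
  have hH2pos : 0 < H2 := by rw [hH2]; linarith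
  set a := H11 / H1 with ha
  set b := H12 / H2 with hb
  have hmin : min a b = a := min_eq_left hle
  have hmax : max a b = b := max_eq_right hle
  rw [hmin, hmax]
  have ha0 : 0 ≤ a := div_nonneg hH11 hH1pos.le
  have hb1 : b ≤ 1 := by
    rw [hb, div_le_one hH2pos]; linarith
  have haH1 : a * H1 = H11 := div_mul_cancel₀ H11 hH1pos.ne'
  have hbH2 : b * H2 = H12 := div_mul_cancel₀ H12 hH2pos.ne'
  have hfnn : ∀ x ∈ Icc (0:ℝ) 1, 0 ≤ f x := by
    intro x hx
    have := hf_mono (Set.left_mem_Icc.mpr zero_le_one) hx hx.1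
    linarith [hf0]
  have hmem : ∀ y ∈ Icc a b, y ∈ Icc (0:ℝ) 1 ∧ (1 - y) ∈ Icc (0:ℝ) 1 := by
    intro y hy
    exact ⟨⟨le_trans ha0 hy.1, le_trans hy.2 hb1⟩,
      ⟨by linarith [hy.2], by linarith [hy.1]⟩⟩
  have hD : ∀ y ∈ Icc a b, 0 < f y + f (1 - y) := by
    intro y hy
    obtain ⟨hy1, hy2⟩ := hmem y hy
    rcases lt_or_eq_of_le hy1.1 with hpos | heq
    · have := hf_pos y ⟨hpos, hy1.2⟩
      linarith [hfnn _ hy2]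
    · have h1y : (1:ℝ) - y = 1 := by rw [← heq]; ring
      rw [h1y]
      have := hfnn _ hy1
      linarith [hf1]
  set φ : ℝ → ℝ := fun y => H1 * ((y - a) * f y) - H2 * ((b - y) * f (1 - y)) with hφ
  have hzero : ∀ y ∈ Icc a b, (h y = 0 ↔ φ y = 0) := by
    intro y hy
    rw [hh y, div_eq_zero_iff]
    constructor
    · rintro (hn | hd)
      · simp only [hφ]
        linear_combination (-1 : ℝ) * hn + (-(f y)) * haH1 + (-(f (1 - y))) * hbH2
      · exact absurd hd (hD y hy).ne'
    · intro hp
      left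
      simp only [hφ] at hp
      linear_combination (-1 : ℝ) * hp + (-(f y)) * haH1 + (-(f (1 - y))) * hbH2
  have hmono : StrictMonoOn φ (Icc a b) := by
    intro x hx y hy hxy
    have hx1 := (hmem x hx).1
    have hy1 := (hmem y hy).1
    have hfy : 0 < f y := hf_pos y ⟨lt_of_le_of_lt (le_trans ha0 hx.1) hxy, hy1.2⟩
    have hfx0 : 0 ≤ f x := hfnn x hx1
    have hfxy : f x ≤ f y := hf_mono hx1 hy1 hxy.le
    have h1 : (x - a) * f x < (y - a) * f y := by
      nlinarith [mul_pos (sub_pos.mpr hxy) hfy,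
        mul_nonneg (by linarith [hx.1] : (0:ℝ) ≤ x - a) (by linarith : (0:ℝ) ≤ f y - f x)]
    have h2 : (b - y) * f (1 - y) ≤ (b - x) * f (1 - x) := by
      have hm := hf_mono (hmem y hy).2 (hmem x hx).2 (by linarith : 1 - y ≤ 1 - x)
      have hn := hfnn _ (hmem y hy).2
      exact mul_le_mul (by linarith) hm hn (by linarith [hy.2])
    simp only [hφ]
    nlinarith [mul_lt_mul_of_pos_left h1 hH1pos, mul_le_mul_of_nonneg_left h2 hH2pos.le]
  have hcont : ContinuousOn φ (Icc a b) := by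
    have cont1 : ContinuousOn (fun y => f y) (Icc a b) :=
      hf_cont.mono (fun y hy => (hmem y hy).1)
    have cont2 : ContinuousOn (fun y => f (1 - y)) (Icc a b) :=
      hf_cont.comp (continuousOn_const.sub continuousOn_id) (fun y hy => (hmem y hy).2)
    exact (continuousOn_const.mul ((continuousOn_id.sub continuousOn_const).mul cont1)).sub
      (continuousOn_const.mul ((continuousOn_const.sub continuousOn_id).mul cont2))
  have hφa : φ a ≤ 0 := by
    have hmema := hmem a ⟨le_refl a, hle⟩
    have hfa := hfnn _ hmema.2
    simp only [hφ]
    nlinarith [mul_nonneg (mul_nonneg (by linarith : (0:ℝ) ≤ b - a) hfa) hH2pos.le]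
  have hφb : 0 ≤ φ b := by
    have hmemb := hmem b ⟨hle, le_refl b⟩
    have hfb := hfnn _ hmemb.1
    simp only [hφ]
    nlinarith [mul_nonneg (mul_nonneg (by linarith : (0:ℝ) ≤ b - a) hfb) hH1pos.le]
  obtain ⟨y, hy, hyz⟩ := intermediate_value_Icc hle hcont ⟨hφa, hφb⟩
  refine ⟨y, ⟨hy, (hzero y hy).mpr hyz⟩, ?_⟩
  rintro z ⟨hz, hz0⟩
  exact hmono.injOn hz hy (by rw [(hzero z hz).mp hz0, hyz])
end

section
/- If H^{11}/H_1 > H^{12}/H_2 and f is concave on [0,1], then h has exactly one zero in the interval I* := [min(H^{11}/H_1, H^{12}/H_2), max(H^{11}/H_1, H^{12}/H_2)]. -/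
open MeasureTheory Filter Set

set_option maxHeartbeats 1000000

lemma key_poly (p q y1 y2 : ℝ) (hp : 0 < p) (h1 : p < y1) (h12 : y1 < y2)
    (h2 : y2 < q) (hq : q < 1) :
    (q - y2) * (y1 - p) * (y2 * (1 - y1)) < (q - y1) * (y2 - p) * (y1 * (1 - y2)) := by
  have K1 : (1 - y1) * (q - y2) < (q - y1) * (1 - y2) := by nlinarith
  have K2 : y2 * (y1 - p) < (y2 - p) * y1 := by nlinarith
  have h0 : (0:ℝ) ≤ (1 - y1) * (q - y2) := by nlinarith
  have h0' : (0:ℝ) ≤ y2 * (y1 - p) := by nlinarith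
  nlinarith [mul_lt_mul'' K1 K2 h0 h0']

lemma conc_ratio (f : ℝ → ℝ) (hf_conc : ConcaveOn ℝ (Set.Icc 0 1) f) (hf0 : f 0 = 0)
    (u v : ℝ) (hu : 0 < u) (huv : u ≤ v) (hv : v ≤ 1) :
    u * f v ≤ v * f u := by
  rcases eq_or_lt_of_le huv with rfl | huv'
  · exact le_rfl
  · have hv0 : 0 < v := lt_trans hu huv'
    have h0m : (0:ℝ) ∈ Set.Icc (0:ℝ) 1 := by simp
    have hvm : v ∈ Set.Icc (0:ℝ) 1 := ⟨hv0.le, hv⟩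
    have ha : (0:ℝ) ≤ 1 - u / v := by
      have : u / v ≤ 1 := (div_le_one hv0).2 huv
      linarith
    have hb : (0:ℝ) ≤ u / v := by positivity
    have hab : (1 - u / v) + u / v = 1 := by ring
    have := hf_conc.2 h0m hvm ha hb hab
    simp only [smul_eq_mul, mul_zero, hf0, zero_add, mul_zero] at this
    have hx : u / v * v = u := by field_simp
    rw [hx] at this
    have := mul_le_mul_of_nonneg_left this hv0.le
    calc u * f v = v * (u / v * f v) := by field_simp
    _ ≤ v * f u := this

/-- If H11/H1 > H12/H2 and f is concave on [0,1] then h has exactly one zero in I*. -/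
theorem unique_zero_of_gt_concave
    (H11 H12 H21 H22 : ℝ)
    (hH11 : 0 ≤ H11) (hH22 : 0 ≤ H22) (hH12 : 0 < H12) (hH21 : 0 < H21)
    (H1 H2 : ℝ) (hH1 : H1 = H11 + H21) (hH2 : H2 = H12 + H22) (hHne : H1 ≠ H2)
    (f : ℝ → ℝ)
    (hf_cont : ContinuousOn f (Set.Icc 0 1))
    (hf_mono : MonotoneOn f (Set.Icc 0 1))
    (hf_diff : DifferentiableOn ℝ f (Set.Icc 0 1))
    (hf0 : f 0 = 0) (hf1 : f 1 = 1)
    (hf_pos : ∀ x ∈ Set.Ioc (0:ℝ) 1, 0 < f x)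
    (h : ℝ → ℝ)
    (hh : ∀ y, h y =
      ((H11 - y * H1) * f y + (H12 - y * H2) * f (1 - y)) / (f y + f (1 - y)))
    (hgt : H12 / H2 < H11 / H1)
    (hf_conc : ConcaveOn ℝ (Set.Icc 0 1) f) :
    ∃! y : ℝ, y ∈ Set.Icc (min (H11 / H1) (H12 / H2)) (max (H11 / H1) (H12 / H2)) ∧
      h y = 0 := by
  have hH1pos : 0 < H1 := by rw [hH1]; linarith
  have hH2pos : 0 < H2 := by rw [hH2]; linarith
  set p := H12 / H2 with hp_def
  set q := H11 / H1 with hq_def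
  have hpq : p < q := hgt
  have hp0 : 0 < p := div_pos hH12 hH2pos
  have hq1 : q < 1 := by rw [hq_def, div_lt_one hH1pos]; linarith
  have hmin : min q p = p := min_eq_right hgt.le
  have hmax : max q p = q := max_eq_left hgt.le
  rw [hmin, hmax]
  have hq' : H11 = q * H1 := by rw [hq_def]; field_simp
  have hp' : H12 = p * H2 := by rw [hp_def]; field_simp
  -- positivity of f values on [p,q]
  have hfy : ∀ y ∈ Set.Icc p q, 0 < f y := fun y hy =>
    hf_pos y ⟨lt_of_lt_of_le hp0 hy.1, hy.2.trans hq1.le⟩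
  have hf1y : ∀ y ∈ Set.Icc p q, 0 < f (1 - y) := fun y hy =>
    hf_pos _ ⟨by linarith [hy.2], by linarith [hy.1]⟩
  have hD : ∀ y ∈ Set.Icc p q, 0 < f y + f (1 - y) := fun y hy =>
    add_pos (hfy y hy) (hf1y y hy)
  -- zero of h iff zero of numerator
  have hNzero : ∀ y ∈ Set.Icc p q,
      (h y = 0 ↔ (H11 - y * H1) * f y + (H12 - y * H2) * f (1 - y) = 0) := by
    intro y hy
    rw [hh y, div_eq_zero_iff]
    constructor
    · rintro (hn | hd)
      · exact hn
      · exact absurd hd (hD y hy).ne'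
    · exact Or.inl
  -- sign at endpoints
  have hNp : 0 < (H11 - p * H1) * f p + (H12 - p * H2) * f (1 - p) := by
    have e1 : H12 - p * H2 = 0 := by rw [hp']; ring
    have e2 : H11 - p * H1 = (q - p) * H1 := by rw [hq']; ring
    rw [e1, e2]
    have hfp := hfy p ⟨le_rfl, hpq.le⟩
    have := mul_pos (mul_pos (sub_pos.2 hpq) hH1pos) hfp
    linarith
  have hNq : (H11 - q * H1) * f q + (H12 - q * H2) * f (1 - q) < 0 := by
    have e1 : H11 - q * H1 = 0 := by rw [hq']; ring
    have e2 : H12 - q * H2 = (p - q) * H2 := by rw [hp']; ring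
    rw [e1, e2]
    have hfq := hf1y q ⟨hpq.le, le_rfl⟩
    have := mul_pos (mul_pos (sub_pos.2 hpq) hH2pos) hfq
    nlinarith
  -- any zero is interior
  have hint : ∀ z ∈ Set.Icc p q, h z = 0 → p < z ∧ z < q := by
    intro z hz hz0
    have hNz := (hNzero z hz).1 hz0
    constructor
    · rcases lt_or_eq_of_le hz.1 with hlt | heq
      · exact hlt
      · exfalso; rw [← heq] at hNz; linarith
    · rcases lt_or_eq_of_le hz.2 with hlt | heq
      · exact hlt
      · exfalso; rw [heq] at hNz; linarith
  -- no two interior zeros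
  have hcore : ∀ y1 y2 : ℝ, p < y1 → y1 < y2 → y2 < q →
      (H11 - y1 * H1) * f y1 + (H12 - y1 * H2) * f (1 - y1) = 0 →
      (H11 - y2 * H1) * f y2 + (H12 - y2 * H2) * f (1 - y2) = 0 → False := by
    intro y1 y2 h1 h12 h2 N1 N2
    rw [hq', hp'] at N1 N2
    have E1 : H1 * (q - y1) * f y1 = H2 * (y1 - p) * f (1 - y1) := by
      linear_combination N1
    have E2 : H1 * (q - y2) * f y2 = H2 * (y2 - p) * f (1 - y2) := by
      linear_combination N2
    have E' : (H1 * H2) * ((q - y1) * f y1 * ((y2 - p) * f (1 - y2))) =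
        (H1 * H2) * ((y1 - p) * f (1 - y1) * ((q - y2) * f y2)) := by
      linear_combination (H2 * (y2 - p) * f (1 - y2)) * E1 - (H2 * (y1 - p) * f (1 - y1)) * E2
    have Ecan : (q - y1) * f y1 * ((y2 - p) * f (1 - y2)) =
        (y1 - p) * f (1 - y1) * ((q - y2) * f y2) :=
      mul_left_cancel₀ (mul_ne_zero hH1pos.ne' hH2pos.ne') E'
    have hy1m : y1 ∈ Set.Icc p q := ⟨h1.le, (h12.trans h2).le⟩
    have hy2m : y2 ∈ Set.Icc p q := ⟨(h1.trans h12).le, h2.le⟩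
    have P1 := hfy y1 hy1m
    have P2 := hfy y2 hy2m
    have Q1 := hf1y y1 hy1m
    have Q2 := hf1y y2 hy2m
    have C1 : y1 * f y2 ≤ y2 * f y1 :=
      conc_ratio f hf_conc hf0 y1 y2 (hp0.trans h1) h12.le (by linarith)
    have C2 : (1 - y2) * f (1 - y1) ≤ (1 - y1) * f (1 - y2) :=
      conc_ratio f hf_conc hf0 (1 - y2) (1 - y1) (by linarith) (by linarith) (by linarith)
    have K := key_poly p q y1 y2 hp0 h1 h12 h2 hq1
    have m1 : (y1 * f y2) * ((1 - y2) * f (1 - y1)) ≤ (y2 * f y1) * ((1 - y1) * f (1 - y2)) :=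
      mul_le_mul C1 C2 (mul_nonneg (by linarith) Q1.le) (mul_nonneg (by linarith) P1.le)
    have m2 : ((q - y1) * (y2 - p)) * ((y1 * f y2) * ((1 - y2) * f (1 - y1))) ≤
        ((q - y1) * (y2 - p)) * ((y2 * f y1) * ((1 - y1) * f (1 - y2))) :=
      mul_le_mul_of_nonneg_left m1 (mul_nonneg (by linarith) (by linarith))
    have m3 : ((q - y2) * (y1 - p) * (y2 * (1 - y1))) * (f y2 * f (1 - y1)) <
        ((q - y1) * (y2 - p) * (y1 * (1 - y2))) * (f y2 * f (1 - y1)) :=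
      mul_lt_mul_of_pos_right K (mul_pos P2 Q1)
    have final : ((q - y2) * (y1 - p) * (y2 * (1 - y1))) * (f y2 * f (1 - y1)) <
        ((q - y1) * (y2 - p)) * ((y2 * f y1) * ((1 - y1) * f (1 - y2))) := by
      calc ((q - y2) * (y1 - p) * (y2 * (1 - y1))) * (f y2 * f (1 - y1))
          < ((q - y1) * (y2 - p) * (y1 * (1 - y2))) * (f y2 * f (1 - y1)) := m3
        _ = ((q - y1) * (y2 - p)) * ((y1 * f y2) * ((1 - y2) * f (1 - y1))) := by ring
        _ ≤ ((q - y1) * (y2 - p)) * ((y2 * f y1) * ((1 - y1) * f (1 - y2))) := m2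
    have Eeq : ((q - y2) * (y1 - p) * (y2 * (1 - y1))) * (f y2 * f (1 - y1)) =
        ((q - y1) * (y2 - p)) * ((y2 * f y1) * ((1 - y1) * f (1 - y2))) := by
      linear_combination (-(y2 * (1 - y1))) * Ecan
    linarith [final, Eeq.le, Eeq.ge]
  -- continuity of h on [p,q]
  have hhf : h = fun y =>
      ((H11 - y * H1) * f y + (H12 - y * H2) * f (1 - y)) / (f y + f (1 - y)) :=
    funext hh
  have hc1 : ContinuousOn f (Set.Icc p q) :=
    hf_cont.mono (Set.Icc_subset_Icc hp0.le hq1.le)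
  have hc2 : ContinuousOn (fun y => f (1 - y)) (Set.Icc p q) := by
    apply hf_cont.comp (continuous_const.sub continuous_id).continuousOn
    intro y hy
    exact ⟨by simp; linarith [hy.2], by simp; linarith [hy.1]⟩
  have hcont : ContinuousOn h (Set.Icc p q) := by
    rw [hhf]
    apply ContinuousOn.div
    · exact (((continuous_const.sub (continuous_id.mul continuous_const)).continuousOn).mul
        hc1).add (((continuous_const.sub (continuous_id.mul continuous_const)).continuousOn).mul
        hc2)
    · exact hc1.add hc2
    · exact fun y hy => (hD y hy).ne'
  -- signs of h at endpoints
  have hhp : 0 < h p := by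
    rw [hh p]
    exact div_pos hNp (hD p ⟨le_rfl, hpq.le⟩)
  have hhq : h q < 0 := by
    rw [hh q]
    exact div_neg_of_neg_of_pos hNq (hD q ⟨hpq.le, le_rfl⟩)
  -- existence
  obtain ⟨y, hym, hy0⟩ := intermediate_value_Icc' hpq.le hcont ⟨hhq.le, hhp.le⟩
  refine ⟨y, ⟨hym, hy0⟩, ?_⟩
  rintro z ⟨hzm, hz0⟩
  by_contra hne
  have hzint := hint z hzm hz0
  have hyint := hint y hym hy0
  have hNz := (hNzero z hzm).1 hz0
  have hNy := (hNzero y hym).1 hy0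
  rcases lt_or_gt_of_ne hne with hlt | hgt'
  · exact hcore z y hzint.1 hlt hyint.2 hNz hNy
  · exact hcore y z hyint.1 hgt' hzint.2 hNy hNz
end

section
/- There exists a positive constant K = K(H_1, H_2), depending only on H_1 and H_2, such that for every n ≥ 0, almost surely |𝔼[ΔM_{n+1}/T_{n+1} | ℱ_n]| ≤ K / T_n². -/
/-!
Since `ΔM_{n+1}` is centred given `ℱ_n` and `T_n` is `ℱ_n`-measurable,
`𝔼[ΔM_{n+1} / T_{n+1} | ℱ_n] = 𝔼[ΔM_{n+1} (1 / T_{n+1} - 1 / T_n) | ℱ_n]`.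
The increment is bounded by `2 (H_1 + H_2)` and `0 ≤ T_{n+1} - T_n ≤ H_1 + H_2`, so
`|1 / T_{n+1} - 1 / T_n| ≤ (H_1 + H_2) / T_n²`.
-/

open MeasureTheory Filter Set

section CondExp

variable {Ω : Type*} {m m0 : MeasurableSpace Ω} {μ : Measure Ω}

theorem condExp_sub_condExp_ae_eq_zero_s13 {E : Type*} [NormedAddCommGroup E] [NormedSpace ℝ E]
    [CompleteSpace E] (hm : m ≤ m0) [SigmaFinite (μ.trim hm)] {F : Ω → E}
    (hF : Integrable F μ) : μ[F - μ[F | m] | m] =ᵐ[μ] 0 := by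
  filter_upwards [condExp_sub hF integrable_condExp m] with ω hω
  rw [hω, condExp_of_stronglyMeasurable hm stronglyMeasurable_condExp integrable_condExp,
    sub_self]

theorem ae_abs_sub_condExp_le {F : Ω → ℝ} {c : ℝ} (hF : ∀ᵐ ω ∂μ, |F ω| ≤ c) :
    ∀ᵐ ω ∂μ, |F ω - μ[F | m] ω| ≤ 2 * c := by
  filter_upwards [hF, ae_bdd_abs_condExp_of_ae_bdd_abs (m := m) hF] with ω hFω hcondω
  linarith [abs_sub (F ω) (μ[F | m] ω)]

theorem condExp_mul_ae_eq_condExp_sub_mul {A B D : Ω → ℝ} (hA : StronglyMeasurable[m] A)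
    (hD : Integrable D μ) (hD0 : μ[D | m] =ᵐ[μ] 0) (hAD : Integrable (A * D) μ)
    (hBD : Integrable (B * D) μ) : μ[B * D | m] =ᵐ[μ] μ[(B - A) * D | m] := by
  filter_upwards [condExp_sub hBD hAD m, condExp_mul_of_stronglyMeasurable_left hA hAD hD, hD0]
    with ω hsub hpull hD0ω
  rw [sub_mul, hsub, Pi.sub_apply, hpull, Pi.mul_apply, hD0ω, Pi.zero_apply, mul_zero, sub_zero]

theorem ae_abs_condExp_le_div [IsFiniteMeasure μ] (hm : m ≤ m0) {A F : Ω → ℝ} {c : ℝ}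
    (hA : StronglyMeasurable[m] A) (hApos : ∀ ω, 0 < A ω) (hF : Integrable F μ)
    (hAF : ∀ᵐ ω ∂μ, |A ω * F ω| ≤ c) : ∀ᵐ ω ∂μ, |μ[F | m] ω| ≤ c / A ω := by
  have hAF_int : Integrable (A * F) μ :=
    (integrable_const c).mono' ((hA.mono hm).aestronglyMeasurable.mul hF.aestronglyMeasurable)
      (by simpa only [Real.norm_eq_abs, Pi.mul_apply] using hAF)
  have hF_eq : F = A⁻¹ * (A * F) := by
    funext ω
    simp [inv_mul_cancel_left₀ (hApos ω).ne']
  have hpull := condExp_mul_of_stronglyMeasurable_left hA.measurable.inv.stronglyMeasurable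
    (by rwa [← hF_eq]) hAF_int
  filter_upwards [hpull, ae_bdd_abs_condExp_of_ae_bdd_abs (m := m) hAF] with ω hpullω hbdω
  rw [hF_eq, hpullω, Pi.mul_apply, Pi.inv_apply, abs_mul, abs_inv, abs_of_pos (hApos ω),
    inv_mul_eq_div]
  exact div_le_div_of_nonneg_right hbdω (hApos ω).le

theorem abs_sq_mul_inv_sub_inv_le {a b : ℝ} (ha : 0 < a) (hab : a ≤ b) :
    |a ^ 2 * (b⁻¹ - a⁻¹)| ≤ b - a := by
  have hb : 0 < b := ha.trans_le hab
  have heq : a ^ 2 * (b⁻¹ - a⁻¹) = -(a / b * (b - a)) := by field_simp; ring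
  rw [heq, abs_neg, abs_of_nonneg (by positivity : 0 ≤ a / b * (b - a))]
  exact mul_le_of_le_one_left (sub_nonneg.2 hab) ((div_le_one hb).2 hab)

theorem ae_abs_condExp_div_le [IsFiniteMeasure μ] (hm : m ≤ m0) {D S S' : Ω → ℝ} {c d s : ℝ}
    (hS : StronglyMeasurable[m] S) (hS' : Measurable S') (hs : 0 < s) (hsS : ∀ ω, s ≤ S ω)
    (hSS' : ∀ ω, S ω ≤ S' ω) (hd : ∀ ω, S' ω - S ω ≤ d) (hD : Integrable D μ)
    (hD0 : μ[D | m] =ᵐ[μ] 0) (hDc : ∀ᵐ ω ∂μ, |D ω| ≤ c) :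
    ∀ᵐ ω ∂μ, |μ[fun ω => D ω / S' ω | m] ω| ≤ c * d / S ω ^ 2 := by
  have hSpos : ∀ ω, 0 < S ω := fun ω => hs.trans_le (hsS ω)
  have hinv_le {R : Ω → ℝ} (hR : ∀ ω, s ≤ R ω) : ∀ᵐ ω ∂μ, ‖R⁻¹ ω‖ ≤ s⁻¹ :=
    ae_of_all _ fun ω => by
      rw [Pi.inv_apply, Real.norm_eq_abs, abs_inv, abs_of_pos (hs.trans_le (hR ω))]
      exact inv_anti₀ hs (hR ω)
  have hSD : Integrable (S⁻¹ * D) μ :=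
    hD.bdd_mul (hS.mono hm).measurable.inv.aestronglyMeasurable (hinv_le hsS)
  have hS'D : Integrable (S'⁻¹ * D) μ :=
    hD.bdd_mul hS'.inv.aestronglyMeasurable (hinv_le fun ω => (hsS ω).trans (hSS' ω))
  rw [show (fun ω => D ω / S' ω) = S'⁻¹ * D from funext fun ω => div_eq_inv_mul _ _]
  have hbound : ∀ᵐ ω ∂μ, |S ω ^ 2 * ((S'⁻¹ - S⁻¹) * D) ω| ≤ d * c := by
    filter_upwards [hDc] with ω hDω
    rw [Pi.mul_apply, ← mul_assoc, abs_mul]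
    exact mul_le_mul ((abs_sq_mul_inv_sub_inv_le (hSpos ω) (hSS' ω)).trans (hd ω))
      hDω (abs_nonneg _) ((sub_nonneg.2 (hSS' ω)).trans (hd ω))
  filter_upwards [condExp_mul_ae_eq_condExp_sub_mul hS.measurable.inv.stronglyMeasurable hD hD0
      hSD hS'D, ae_abs_condExp_le_div hm (hS.pow 2) (fun ω => pow_pos (hSpos ω) 2)
      (by rw [sub_mul]; exact hS'D.sub hSD) hbound] with ω hsubω hbdω
  rw [hsubω, mul_comm c]
  exact hbdω

theorem ae_abs_condExp_sub_condExp_div_le [IsFiniteMeasure μ] (hm : m ≤ m0) {F S S' : Ω → ℝ}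
    {c d s : ℝ} (hS : StronglyMeasurable[m] S) (hS' : Measurable S') (hs : 0 < s)
    (hsS : ∀ ω, s ≤ S ω) (hSS' : ∀ ω, S ω ≤ S' ω) (hd : ∀ ω, S' ω - S ω ≤ d)
    (hF : AEStronglyMeasurable F μ) (hFc : ∀ᵐ ω ∂μ, |F ω| ≤ c) :
    ∀ᵐ ω ∂μ, |μ[fun ω => (F ω - μ[F | m] ω) / S' ω | m] ω| ≤ 2 * c * d / S ω ^ 2 := by
  have hF_int : Integrable F μ :=
    (integrable_const c).mono' hF (by simpa only [Real.norm_eq_abs] using hFc)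
  exact ae_abs_condExp_div_le hm hS hS' hs hsS hSS' hd (hF_int.sub integrable_condExp)
    (condExp_sub_condExp_ae_eq_zero_s13 hm hF_int) (ae_abs_sub_condExp_le hFc)

end CondExp

theorem Measurable.bool_ite {Ω β : Type*} {m : MeasurableSpace Ω} [MeasurableSpace β]
    {X : Ω → Bool} {f g : Ω → β} (hX : Measurable X) (hf : Measurable f) (hg : Measurable g) :
    Measurable fun ω => if X ω then f ω else g ω :=
  Measurable.ite (hX (measurableSet_singleton true)) hf hg

theorem abs_sub_mul_add_le {a b z : ℝ} (ha : 0 ≤ a) (hb : 0 ≤ b) (hz0 : 0 ≤ z) (hz1 : z ≤ 1) :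
    |a - z * (a + b)| ≤ a + b :=
  abs_le.2 ⟨by nlinarith, by nlinarith⟩

theorem abs_ite_sub_div_mul_le {a₁₁ a₁₂ a₂₁ a₂₂ y₁ y₂ : ℝ} (h₁₁ : 0 ≤ a₁₁) (h₁₂ : 0 ≤ a₁₂)
    (h₂₁ : 0 ≤ a₂₁) (h₂₂ : 0 ≤ a₂₂) (hy₁ : 0 ≤ y₁) (hy₂ : 0 ≤ y₂) (b : Bool) :
    |if b then a₁₁ - y₁ / (y₁ + y₂) * (a₁₁ + a₂₁) else a₁₂ - y₁ / (y₁ + y₂) * (a₁₂ + a₂₂)|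
      ≤ a₁₁ + a₂₁ + (a₁₂ + a₂₂) := by
  have hz0 : 0 ≤ y₁ / (y₁ + y₂) := by positivity
  have hz1 : y₁ / (y₁ + y₂) ≤ 1 := div_le_one_of_le₀ (by linarith) (by positivity)
  split_ifs
  · linarith [abs_sub_mul_add_le h₁₁ h₂₁ hz0 hz1]
  · linarith [abs_sub_mul_add_le h₁₂ h₂₂ hz0 hz1]

theorem conditional_mean_increment_bound_general
    (H11 H12 H21 H22 : ℝ)
    (hH11 : 0 ≤ H11) (hH22 : 0 ≤ H22) (hH12 : 0 < H12) (hH21 : 0 < H21)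
    (H1 H2 : ℝ) (hH1 : H1 = H11 + H21) (hH2 : H2 = H12 + H22)
    {Ω : Type*} {m0 : MeasurableSpace Ω} {ℙ : Measure Ω} [IsProbabilityMeasure ℙ]
    (ℱ : Filtration ℕ m0)
    (X : ℕ → Ω → Bool)
    (hX_meas : ∀ n : ℕ, Measurable[ℱ (n + 1)] (X (n + 1)))
    (Y1 Y2 : ℕ → Ω → ℝ)
    (hY1_meas : ∀ n : ℕ, Measurable[ℱ n] (Y1 n))
    (hY2_meas : ∀ n : ℕ, Measurable[ℱ n] (Y2 n))
    (hY1_ge : ∀ n ω, 1 ≤ Y1 n ω) (hY2_ge : ∀ n ω, 1 ≤ Y2 n ω)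
    (T : ℕ → Ω → ℝ) (hT : ∀ n ω, T n ω = Y1 n ω + Y2 n ω)
    (hupd1 : ∀ n ω, Y1 (n + 1) ω = Y1 n ω + (if X (n + 1) ω then H11 else H12))
    (hupd2 : ∀ n ω, Y2 (n + 1) ω = Y2 n ω + (if X (n + 1) ω then H21 else H22))
    (Z : ℕ → Ω → ℝ) (hZ : ∀ n ω, Z n ω = Y1 n ω / T n ω)
    (L : ℕ → Ω → ℝ)
    (hL : ∀ n ω, L (n + 1) ω =
      if X (n + 1) ω then H11 - Z n ω * H1 else H12 - Z n ω * H2)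
    (ΔM : ℕ → Ω → ℝ)
    (hΔM : ∀ n : ℕ, ΔM (n + 1) = L (n + 1) - ℙ[L (n + 1) | ℱ n]) :
    ∃ K > 0, ∀ n : ℕ, ∀ᵐ ω ∂ℙ,
      |(ℙ[fun ω' => ΔM (n + 1) ω' / T (n + 1) ω' | ℱ n]) ω| ≤ K / (T n ω) ^ 2 := by
  have hH1_pos : 0 < H1 := by linarith
  have hH2_pos : 0 < H2 := by linarith
  have hT_meas (k : ℕ) : Measurable[ℱ k] (T k) := by
    rw [show T k = Y1 k + Y2 k from funext (hT k)]
    exact (hY1_meas k).add (hY2_meas k)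
  refine ⟨2 * (H1 + H2) * (H1 + H2), by positivity, fun n => ?_⟩
  have hT_step (ω : Ω) : T n ω ≤ T (n + 1) ω ∧ T (n + 1) ω - T n ω ≤ H1 + H2 := by
    rw [hT (n + 1), hupd1, hupd2, hT n]
    split_ifs <;> constructor <;> linarith
  have hL_meas : Measurable[ℱ (n + 1)] (L (n + 1)) := by
    have hZ_meas : Measurable[ℱ (n + 1)] (Z n) := by
      rw [show Z n = Y1 n / T n from funext (hZ n)]
      exact ((hY1_meas n).div (hT_meas n)).mono (ℱ.mono n.le_succ) le_rfl
    rw [funext (hL n)]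
    exact (hX_meas n).bool_ite (measurable_const.sub (hZ_meas.mul_const _))
      (measurable_const.sub (hZ_meas.mul_const _))
  have hL_le (ω : Ω) : |L (n + 1) ω| ≤ H1 + H2 := by
    rw [hL, hZ, hT, hH1, hH2]
    exact abs_ite_sub_div_mul_le hH11 hH12.le hH21.le hH22 (by linarith [hY1_ge n ω])
      (by linarith [hY2_ge n ω]) _
  rw [hΔM n]
  exact ae_abs_condExp_sub_condExp_div_le (ℱ.le n) (hT_meas n).stronglyMeasurable
    ((hT_meas (n + 1)).mono (ℱ.le _) le_rfl) one_pos
    (fun ω => by linarith [hT n ω, hY1_ge n ω, hY2_ge n ω]) (fun ω => (hT_step ω).1)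
    (fun ω => (hT_step ω).2) (hL_meas.mono (ℱ.le _) le_rfl).aestronglyMeasurable
    (ae_of_all _ hL_le)

/-- There is a constant K = K(H1,H2) > 0 with
|𝔼[ΔM_{n+1}/T_{n+1} | ℱ_n]| ≤ K / T_n² almost surely. -/
theorem conditional_mean_increment_bound
    (H11 H12 H21 H22 : ℝ)
    (hH11 : 0 ≤ H11) (hH22 : 0 ≤ H22) (hH12 : 0 < H12) (hH21 : 0 < H21)
    (H1 H2 : ℝ) (hH1 : H1 = H11 + H21) (hH2 : H2 = H12 + H22) (hHne : H1 ≠ H2)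
    (f : ℝ → ℝ)
    (hf_cont : ContinuousOn f (Set.Icc 0 1))
    (hf_mono : MonotoneOn f (Set.Icc 0 1))
    (hf_diff : DifferentiableOn ℝ f (Set.Icc 0 1))
    (hf0 : f 0 = 0) (hf1 : f 1 = 1)
    (hf_pos : ∀ x ∈ Set.Ioc (0:ℝ) 1, 0 < f x)
    {Ω : Type*} {m0 : MeasurableSpace Ω} {ℙ : Measure Ω} [IsProbabilityMeasure ℙ]
    (ℱ : Filtration ℕ m0)
    (X : ℕ → Ω → Bool)
    (hX_meas : ∀ n : ℕ, Measurable[ℱ (n + 1)] (X (n + 1)))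
    (Y1 Y2 : ℕ → Ω → ℝ)
    (hY1_meas : ∀ n : ℕ, Measurable[ℱ n] (Y1 n))
    (hY2_meas : ∀ n : ℕ, Measurable[ℱ n] (Y2 n))
    (hY1_ge : ∀ n ω, 1 ≤ Y1 n ω) (hY2_ge : ∀ n ω, 1 ≤ Y2 n ω)
    (T : ℕ → Ω → ℝ) (hT : ∀ n ω, T n ω = Y1 n ω + Y2 n ω)
    (hdraw1 : ∀ n : ℕ,
      ℙ[(fun ω => if X (n + 1) ω then (1 : ℝ) else 0) | ℱ n]
        =ᵐ[ℙ] fun ω => f (Y1 n ω / T n ω) / (f (Y1 n ω / T n ω) + f (Y2 n ω / T n ω)))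
    (hdraw2 : ∀ n : ℕ,
      ℙ[(fun ω => if X (n + 1) ω then (0 : ℝ) else 1) | ℱ n]
        =ᵐ[ℙ] fun ω => f (Y2 n ω / T n ω) / (f (Y1 n ω / T n ω) + f (Y2 n ω / T n ω)))
    (hupd1 : ∀ n ω, Y1 (n + 1) ω = Y1 n ω + (if X (n + 1) ω then H11 else H12))
    (hupd2 : ∀ n ω, Y2 (n + 1) ω = Y2 n ω + (if X (n + 1) ω then H21 else H22))
    (Z : ℕ → Ω → ℝ) (hZ : ∀ n ω, Z n ω = Y1 n ω / T n ω)
    (L : ℕ → Ω → ℝ)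
    (hL : ∀ n ω, L (n + 1) ω =
      if X (n + 1) ω then H11 - Z n ω * H1 else H12 - Z n ω * H2)
    (ΔM : ℕ → Ω → ℝ)
    (hΔM : ∀ n : ℕ, ΔM (n + 1) = L (n + 1) - ℙ[L (n + 1) | ℱ n]) :
    ∃ K > 0, ∀ n : ℕ, ∀ᵐ ω ∂ℙ,
      |(ℙ[fun ω' => ΔM (n + 1) ω' / T (n + 1) ω' | ℱ n]) ω| ≤ K / (T n ω) ^ 2 :=
  conditional_mean_increment_bound_general H11 H12 H21 H22 hH11 hH22 hH12 hH21 H1 H2 hH1 hH2 ℱ X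
    hX_meas Y1 Y2 hY1_meas hY2_meas hY1_ge hY2_ge T hT hupd1 hupd2 Z hZ L hL ΔM hΔM
end

section
/- Let y* ∈ [0,1] be a zero of h. For any ε > 0 and any integer k with k ≥ 24(H_1+H_2)/(ε·min{H_1, H_2}), one has the event inclusions {Z_k − y* ≤ ε/2} ⊆ {Z_{k+1} − y* ≤ (3/4)ε} and {Z_k − y* ≥ −ε/2} ⊆ {Z_{k+1} − y* ≥ −(3/4)ε}. -/
open MeasureTheory Filter Set

/-!
The inclusions are deterministic. After `n` draws the urn holds at least `n · min H₁ H₂` balls,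
and adding `a + b` balls to an urn of total `t` moves the proportion of a colour by at most
`(a + b) / (t + a + b)`. Hence once `k ≥ 24 (H₁ + H₂) / (ε min H₁ H₂)` one draw moves `Z` by at
most `ε / 24`, which is less than the gap `ε / 4` between the two thresholds.
-/

theorem add_mul_le_of_le_sub_succ {u : ℕ → ℝ} {m : ℝ} (h : ∀ n, m ≤ u (n + 1) - u n) :
    ∀ n : ℕ, u 0 + n * m ≤ u n
  | 0 => by simp
  | n + 1 => by
    have := add_mul_le_of_le_sub_succ h n
    have := h n
    push_cast
    linarith

theorem abs_div_add_add_sub_div_le {y y' a b : ℝ} (hy : 0 ≤ y) (hy' : 0 ≤ y') (ht : 0 < y + y')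
    (ha : 0 ≤ a) (hb : 0 ≤ b) :
    |(y + a) / (y + a + (y' + b)) - y / (y + y')| ≤ (a + b) / (y + a + (y' + b)) := by
  have ht' : 0 < y + a + (y' + b) := by linarith
  have hz₀ : 0 ≤ y / (y + y') := div_nonneg hy ht.le
  have hz₁ : y / (y + y') ≤ 1 := (div_le_one ht).mpr (by linarith)
  have hsplit : (y + a) / (y + a + (y' + b)) - y / (y + y') =
      (a - y / (y + y') * (a + b)) / (y + a + (y' + b)) := by
    field_simp
    ring
  rw [hsplit, abs_div, abs_of_pos ht']
  gcongr
  rw [abs_le]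
  constructor <;> nlinarith

section UrnPath

variable {H11 H12 H21 H22 : ℝ} {x : ℕ → Bool} {y₁ y₂ : ℕ → ℝ}

theorem urn_total_succ
    (h₁ : ∀ n, y₁ (n + 1) = y₁ n + if x (n + 1) then H11 else H12)
    (h₂ : ∀ n, y₂ (n + 1) = y₂ n + if x (n + 1) then H21 else H22) (n : ℕ) :
    y₁ (n + 1) + y₂ (n + 1) = y₁ n + y₂ n + if x (n + 1) then H11 + H21 else H12 + H22 := by
  rw [h₁, h₂]
  split <;> ring

theorem urn_total_ge
    (h₁ : ∀ n, y₁ (n + 1) = y₁ n + if x (n + 1) then H11 else H12)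
    (h₂ : ∀ n, y₂ (n + 1) = y₂ n + if x (n + 1) then H21 else H22) (n : ℕ) :
    y₁ 0 + y₂ 0 + n * min (H11 + H21) (H12 + H22) ≤ y₁ n + y₂ n := by
  refine add_mul_le_of_le_sub_succ (u := fun n => y₁ n + y₂ n) (fun n => ?_) n
  rw [urn_total_succ h₁ h₂]
  split <;> simp

theorem abs_urn_proportion_succ_sub_le (hH11 : 0 ≤ H11) (hH22 : 0 ≤ H22) (hH12 : 0 ≤ H12)
    (hH21 : 0 ≤ H21)
    (h₁ : ∀ n, y₁ (n + 1) = y₁ n + if x (n + 1) then H11 else H12)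
    (h₂ : ∀ n, y₂ (n + 1) = y₂ n + if x (n + 1) then H21 else H22) {n : ℕ}
    (hy₁ : 0 ≤ y₁ n) (hy₂ : 0 ≤ y₂ n) (ht : 0 < y₁ n + y₂ n) :
    |y₁ (n + 1) / (y₁ (n + 1) + y₂ (n + 1)) - y₁ n / (y₁ n + y₂ n)| ≤
      max (H11 + H21) (H12 + H22) / (y₁ (n + 1) + y₂ (n + 1)) := by
  rw [h₁, h₂]
  cases x (n + 1) <;> simp only [Bool.false_eq_true, ↓reduceIte]
  · refine (abs_div_add_add_sub_div_le hy₁ hy₂ ht hH12 hH22).trans ?_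
    gcongr
    exact le_max_right _ _
  · refine (abs_div_add_add_sub_div_le hy₁ hy₂ ht hH11 hH21).trans ?_
    gcongr
    exact le_max_left _ _

end UrnPath

theorem one_step_event_inclusions_general
    (H11 H12 H21 H22 : ℝ)
    (hH11 : 0 ≤ H11) (hH22 : 0 ≤ H22) (hH12 : 0 < H12) (hH21 : 0 < H21)
    (H1 H2 : ℝ) (hH1 : H1 = H11 + H21) (hH2 : H2 = H12 + H22)
    {Ω : Type*}
    (X : ℕ → Ω → Bool)
    (Y1 Y2 : ℕ → Ω → ℝ)
    (hY1_ge : ∀ n ω, 1 ≤ Y1 n ω) (hY2_ge : ∀ n ω, 1 ≤ Y2 n ω)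
    (T : ℕ → Ω → ℝ) (hT : ∀ n ω, T n ω = Y1 n ω + Y2 n ω)
    (hupd1 : ∀ n ω, Y1 (n + 1) ω = Y1 n ω + (if X (n + 1) ω then H11 else H12))
    (hupd2 : ∀ n ω, Y2 (n + 1) ω = Y2 n ω + (if X (n + 1) ω then H21 else H22))
    (Z : ℕ → Ω → ℝ) (hZ : ∀ n ω, Z n ω = Y1 n ω / T n ω)
    (ystar : ℝ) :
    ∀ ε > (0:ℝ), ∀ k : ℕ, 24 * (H1 + H2) / (ε * min H1 H2) ≤ (k : ℝ) →
      {ω | Z k ω - ystar ≤ ε / 2} ⊆ {ω | Z (k + 1) ω - ystar ≤ 3 / 4 * ε} ∧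
      {ω | -(ε / 2) ≤ Z k ω - ystar} ⊆ {ω | -(3 / 4 * ε) ≤ Z (k + 1) ω - ystar} := by
  intro ε hε k hk
  have hH1pos : 0 < H1 := by linarith
  have hH2pos : 0 < H2 := by linarith
  have hm : 0 < min H1 H2 := lt_min hH1pos hH2pos
  have hkm : 24 * (H1 + H2) / ε ≤ k * min H1 H2 := by
    rw [div_le_iff₀ (by positivity)] at hk
    rw [div_le_iff₀ hε]
    linarith
  have hstep : ∀ ω, |Z (k + 1) ω - Z k ω| ≤ ε / 4 := by
    intro ω
    have hupd1ω n := hupd1 n ω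
    have hupd2ω n := hupd2 n ω
    have hgrow := urn_total_ge (x := (X · ω)) (y₁ := (Y1 · ω)) (y₂ := (Y2 · ω))
      hupd1ω hupd2ω (k + 1)
    have := hY1_ge 0 ω
    have := hY2_ge 0 ω
    have := hY1_ge k ω
    have := hY2_ge k ω
    simp only [hZ, hT, ← hH1, ← hH2] at hgrow ⊢
    push_cast at hgrow
    have hpos : 0 < 24 * (H1 + H2) / ε := by positivity
    have hT' : 24 * (H1 + H2) / ε ≤ Y1 (k + 1) ω + Y2 (k + 1) ω := by linarith
    calc |Y1 (k + 1) ω / (Y1 (k + 1) ω + Y2 (k + 1) ω) - Y1 k ω / (Y1 k ω + Y2 k ω)|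
        ≤ max H1 H2 / (Y1 (k + 1) ω + Y2 (k + 1) ω) := by
          rw [hH1, hH2]
          exact abs_urn_proportion_succ_sub_le (x := (X · ω)) (y₁ := (Y1 · ω)) (y₂ := (Y2 · ω))
            hH11 hH22 hH12.le hH21.le hupd1ω hupd2ω (by linarith) (by linarith) (by linarith)
      _ ≤ (H1 + H2) / (24 * (H1 + H2) / ε) := by
          gcongr
          exact max_le (by linarith) (by linarith)
      _ = ε / 24 := by field_simp
      _ ≤ ε / 4 := by linarith
  constructor <;> intro ω hω <;> simp only [mem_ofPred_eq] at hω ⊢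
  · linarith [(abs_le.mp (hstep ω)).2]
  · linarith [(abs_le.mp (hstep ω)).1]

/-- One-step event inclusions for the proportion process Z around a zero y* of h. -/
theorem one_step_event_inclusions
    (H11 H12 H21 H22 : ℝ)
    (hH11 : 0 ≤ H11) (hH22 : 0 ≤ H22) (hH12 : 0 < H12) (hH21 : 0 < H21)
    (H1 H2 : ℝ) (hH1 : H1 = H11 + H21) (hH2 : H2 = H12 + H22) (hHne : H1 ≠ H2)
    (f : ℝ → ℝ)
    (hf_cont : ContinuousOn f (Set.Icc 0 1))
    (hf_mono : MonotoneOn f (Set.Icc 0 1))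
    (hf_diff : DifferentiableOn ℝ f (Set.Icc 0 1))
    (hf0 : f 0 = 0) (hf1 : f 1 = 1)
    (hf_pos : ∀ x ∈ Set.Ioc (0:ℝ) 1, 0 < f x)
    (h : ℝ → ℝ)
    (hh : ∀ y, h y =
      ((H11 - y * H1) * f y + (H12 - y * H2) * f (1 - y)) / (f y + f (1 - y)))
    {Ω : Type*} {m0 : MeasurableSpace Ω} {ℙ : Measure Ω} [IsProbabilityMeasure ℙ]
    (ℱ : Filtration ℕ m0)
    (X : ℕ → Ω → Bool)
    (hX_meas : ∀ n : ℕ, Measurable[ℱ (n + 1)] (X (n + 1)))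
    (Y1 Y2 : ℕ → Ω → ℝ)
    (hY1_meas : ∀ n : ℕ, Measurable[ℱ n] (Y1 n))
    (hY2_meas : ∀ n : ℕ, Measurable[ℱ n] (Y2 n))
    (hY1_ge : ∀ n ω, 1 ≤ Y1 n ω) (hY2_ge : ∀ n ω, 1 ≤ Y2 n ω)
    (T : ℕ → Ω → ℝ) (hT : ∀ n ω, T n ω = Y1 n ω + Y2 n ω)
    (hdraw1 : ∀ n : ℕ,
      ℙ[(fun ω => if X (n + 1) ω then (1 : ℝ) else 0) | ℱ n]
        =ᵐ[ℙ] fun ω => f (Y1 n ω / T n ω) / (f (Y1 n ω / T n ω) + f (Y2 n ω / T n ω)))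
    (hdraw2 : ∀ n : ℕ,
      ℙ[(fun ω => if X (n + 1) ω then (0 : ℝ) else 1) | ℱ n]
        =ᵐ[ℙ] fun ω => f (Y2 n ω / T n ω) / (f (Y1 n ω / T n ω) + f (Y2 n ω / T n ω)))
    (hupd1 : ∀ n ω, Y1 (n + 1) ω = Y1 n ω + (if X (n + 1) ω then H11 else H12))
    (hupd2 : ∀ n ω, Y2 (n + 1) ω = Y2 n ω + (if X (n + 1) ω then H21 else H22))
    (Z : ℕ → Ω → ℝ) (hZ : ∀ n ω, Z n ω = Y1 n ω / T n ω)
    (L : ℕ → Ω → ℝ)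
    (hL : ∀ n ω, L (n + 1) ω =
      if X (n + 1) ω then H11 - Z n ω * H1 else H12 - Z n ω * H2)
    (ΔM : ℕ → Ω → ℝ)
    (hΔM : ∀ n : ℕ, ΔM (n + 1) = L (n + 1) - ℙ[L (n + 1) | ℱ n])
    (ystar : ℝ) (hy_mem : ystar ∈ Set.Icc (0:ℝ) 1) (hy_zero : h ystar = 0) :
    ∀ ε > (0:ℝ), ∀ k : ℕ, 24 * (H1 + H2) / (ε * min H1 H2) ≤ (k : ℝ) →
      {ω | Z k ω - ystar ≤ ε / 2} ⊆ {ω | Z (k + 1) ω - ystar ≤ 3 / 4 * ε} ∧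
      {ω | -(ε / 2) ≤ Z k ω - ystar} ⊆ {ω | -(3 / 4 * ε) ≤ Z (k + 1) ω - ystar} :=
  one_step_event_inclusions_general H11 H12 H21 H22 hH11 hH22 hH12 hH21 H1 H2 hH1 hH2 X Y1 Y2 hY1_ge
    hY2_ge T hT hupd1 hupd2 Z hZ ystar
end

section
/- If H^{11} < H^{12} and H^{22} < H^{21}, then h′(y) ≤ 0 for every y ∈ [0,1]; in particular h is non-increasing on [0,1]. -/
open MeasureTheory Filter Set Topology

/-- The derivative (within `Icc 0 1`) of a monotone function is nonnegative. -/
lemma derivWithin_nonneg_of_monotoneOn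
    {f : ℝ → ℝ} (hf_mono : MonotoneOn f (Set.Icc 0 1))
    {x a : ℝ} (hx : x ∈ Set.Icc (0:ℝ) 1)
    (hd : HasDerivWithinAt f a (Set.Icc 0 1) x) : 0 ≤ a := by
  have hne : (𝓝[Set.Icc (0:ℝ) 1 \ {x}] x).NeBot := by
    rw [← mem_closure_iff_nhdsWithin_neBot]
    rcases lt_or_ge x 1 with hx1 | hx1
    · have hsub : Set.Ioo x 1 ⊆ Set.Icc (0:ℝ) 1 \ {x} := fun z hz =>
        ⟨⟨hx.1.trans hz.1.le, hz.2.le⟩, ne_of_gt hz.1⟩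
      have : x ∈ closure (Set.Ioo x 1) := by
        rw [closure_Ioo (ne_of_lt hx1)]; exact ⟨le_refl x, hx1.le⟩
      exact closure_mono hsub this
    · have hx1' : x = 1 := le_antisymm hx.2 hx1
      have hsub : Set.Ioo (0:ℝ) 1 ⊆ Set.Icc (0:ℝ) 1 \ {x} := fun z hz =>
        ⟨⟨hz.1.le, hz.2.le⟩, by rw [hx1']; exact ne_of_lt hz.2⟩
      have : x ∈ closure (Set.Ioo (0:ℝ) 1) := by
        rw [closure_Ioo (zero_ne_one)]; exact hx
      exact closure_mono hsub this
  have ht : Filter.Tendsto (slope f x) (𝓝[Set.Icc (0:ℝ) 1 \ {x}] x) (𝓝 a) :=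
    hasDerivWithinAt_iff_tendsto_slope.mp hd
  refine ge_of_tendsto ht ?_
  filter_upwards [eventually_mem_nhdsWithin] with z hz
  rw [slope_def_field]
  rcases lt_trichotomy z x with hzx | hzx | hzx
  · apply div_nonneg_of_nonpos
    · exact sub_nonpos.2 (hf_mono hz.1 hx hzx.le)
    · linarith
  · exact absurd hzx hz.2
  · apply div_nonneg
    · exact sub_nonneg.2 (hf_mono hx hz.1 hzx.le)
    · linarith

/-- If H11 < H12 and H22 < H21 then h′ ≤ 0 on [0,1]; in particular h is
non-increasing on [0,1]. -/
theorem h_nonincreasing_of_entries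
    (H11 H12 H21 H22 : ℝ)
    (hH11 : 0 ≤ H11) (hH22 : 0 ≤ H22) (hH12 : 0 < H12) (hH21 : 0 < H21)
    (H1 H2 : ℝ) (hH1 : H1 = H11 + H21) (hH2 : H2 = H12 + H22) (hHne : H1 ≠ H2)
    (f : ℝ → ℝ)
    (hf_cont : ContinuousOn f (Set.Icc 0 1))
    (hf_mono : MonotoneOn f (Set.Icc 0 1))
    (hf_diff : DifferentiableOn ℝ f (Set.Icc 0 1))
    (hf0 : f 0 = 0) (hf1 : f 1 = 1)
    (hf_pos : ∀ x ∈ Set.Ioc (0:ℝ) 1, 0 < f x)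
    (h : ℝ → ℝ)
    (hh : ∀ y, h y =
      ((H11 - y * H1) * f y + (H12 - y * H2) * f (1 - y)) / (f y + f (1 - y)))
    (h12gt : H11 < H12) (h21gt : H22 < H21) :
    (∀ y ∈ Set.Icc (0:ℝ) 1, derivWithin h (Set.Icc 0 1) y ≤ 0) ∧
      AntitoneOn h (Set.Icc 0 1) := by
  have hfun : h = fun y =>
      ((H11 - y * H1) * f y + (H12 - y * H2) * f (1 - y)) / (f y + f (1 - y)) :=
    funext hh
  have hH1pos : 0 < H1 := by rw [hH1]; linarith
  have hH2pos : 0 < H2 := by rw [hH2]; linarith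
  have hmaps : ∀ y ∈ Set.Icc (0:ℝ) 1, (1 - y) ∈ Set.Icc (0:ℝ) 1 := by
    intro y hy; exact ⟨by linarith [hy.2], by linarith [hy.1]⟩
  have hfnn : ∀ x ∈ Set.Icc (0:ℝ) 1, 0 ≤ f x := by
    intro x hx
    have := hf_mono (Set.mem_Icc.2 ⟨le_refl 0, zero_le_one⟩) hx hx.1
    rw [hf0] at this; exact this
  have hDpos : ∀ y ∈ Set.Icc (0:ℝ) 1, 0 < f y + f (1 - y) := by
    intro y hy
    rcases eq_or_lt_of_le hy.1 with h0 | h0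
    · have : f (1 - y) = 1 := by rw [← h0]; simpa using hf1
      rw [this]
      linarith [hfnn y hy]
    · have : 0 < f y := hf_pos y ⟨h0, hy.2⟩
      linarith [hfnn (1 - y) (hmaps y hy)]
  -- main derivative fact
  have main : ∀ y ∈ Set.Icc (0:ℝ) 1, ∃ E, HasDerivWithinAt h E (Set.Icc 0 1) y ∧ E ≤ 0 := by
    intro y hy
    set s := Set.Icc (0:ℝ) 1 with hs
    have h1y : (1 - y) ∈ s := hmaps y hy
    set u := f y with hu
    set v := f (1 - y) with hv
    set a := derivWithin f s y with ha
    set b := derivWithin f s (1 - y) with hb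
    have hfa : HasDerivWithinAt f a s y := (hf_diff y hy).hasDerivWithinAt
    have hfb : HasDerivWithinAt f b s (1 - y) := (hf_diff _ h1y).hasDerivWithinAt
    have hsub : HasDerivWithinAt (fun z : ℝ => 1 - z) (-1) s y :=
      (hasDerivWithinAt_id y s).const_sub 1
    have hcomp : HasDerivWithinAt (fun z => f (1 - z)) (b * (-1)) s y :=
      HasDerivWithinAt.comp y hfb hsub (fun z hz => hmaps z hz)
    have hA : HasDerivWithinAt (fun z : ℝ => H11 - z * H1) (-(1 * H1)) s y :=
      ((hasDerivWithinAt_id y s).mul_const H1).const_sub H11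
    have hB : HasDerivWithinAt (fun z : ℝ => H12 - z * H2) (-(1 * H2)) s y :=
      ((hasDerivWithinAt_id y s).mul_const H2).const_sub H12
    have hN : HasDerivWithinAt
        (fun z => (H11 - z * H1) * f z + (H12 - z * H2) * f (1 - z))
        ((-(1 * H1) * u + (H11 - y * H1) * a) + (-(1 * H2) * v + (H12 - y * H2) * (b * (-1))))
        s y := (hA.mul hfa).add (hB.mul hcomp)
    have hD : HasDerivWithinAt (fun z => f z + f (1 - z)) (a + b * (-1)) s y :=
      hfa.add hcomp
    have hDne : u + v ≠ 0 := ne_of_gt (hDpos y hy)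
    have hQ := hN.div hD hDne
    refine ⟨_, by rw [hfun]; exact hQ, ?_⟩
    -- now show the derivative value is ≤ 0
    have ha0 : 0 ≤ a := derivWithin_nonneg_of_monotoneOn hf_mono hy hfa
    have hb0 : 0 ≤ b := derivWithin_nonneg_of_monotoneOn hf_mono h1y hfb
    have hu0 : 0 ≤ u := hfnn y hy
    have hv0 : 0 ≤ v := hfnn _ h1y
    have hAB : (H11 - y * H1) - (H12 - y * H2) ≤ 0 := by
      have h1 : (1 - y) * (H11 - H12) ≤ 0 :=
        mul_nonpos_of_nonneg_of_nonpos (by linarith [hy.2]) (by linarith)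
      have h2 : y * (H22 - H21) ≤ 0 :=
        mul_nonpos_of_nonneg_of_nonpos hy.1 (by linarith)
      nlinarith [h1, h2]
    apply div_nonpos_of_nonpos_of_nonneg _ (sq_nonneg (u + v))
    have key : ((-(1 * H1) * u + (H11 - y * H1) * a) +
          (-(1 * H2) * v + (H12 - y * H2) * (b * (-1)))) * (u + v) -
        ((H11 - y * H1) * u + (H12 - y * H2) * v) * (a + b * (-1)) =
        (-(H1 * u) - H2 * v) * (u + v) +
          ((H11 - y * H1) - (H12 - y * H2)) * (a * v + b * u) := by ring
    rw [key]
    have t1 : (-(H1 * u) - H2 * v) * (u + v) ≤ 0 := by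
      apply mul_nonpos_of_nonpos_of_nonneg
      · nlinarith
      · linarith
    have t2 : ((H11 - y * H1) - (H12 - y * H2)) * (a * v + b * u) ≤ 0 :=
      mul_nonpos_of_nonpos_of_nonneg hAB
        (by positivity)
    linarith
  constructor
  · intro y hy
    obtain ⟨E, hE, hE0⟩ := main y hy
    rw [hE.derivWithin (uniqueDiffOn_Icc one_pos y hy)]
    exact hE0
  · apply antitoneOn_of_deriv_nonpos (convex_Icc 0 1)
    · rw [hfun]
      have hc2 : ContinuousOn (fun z => f (1 - z)) (Set.Icc (0:ℝ) 1) :=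
        hf_cont.comp ((continuous_const.sub continuous_id).continuousOn)
          (fun z hz => hmaps z hz)
      exact (((continuousOn_const.sub (continuousOn_id.mul continuousOn_const)).mul
        hf_cont).add ((continuousOn_const.sub
          (continuousOn_id.mul continuousOn_const)).mul hc2)).div
        (hf_cont.add hc2) (fun y hy => ne_of_gt (hDpos y hy))
    · intro x hx
      rw [interior_Icc] at hx
      obtain ⟨E, hE, _⟩ := main x ⟨hx.1.le, hx.2.le⟩
      exact ((hE.hasDerivAt (Icc_mem_nhds hx.1 hx.2)).differentiableAt).differentiableWithinAt
    · intro x hx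
      rw [interior_Icc] at hx
      obtain ⟨E, hE, hE0⟩ := main x ⟨hx.1.le, hx.2.le⟩
      rw [(hE.hasDerivAt (Icc_mem_nhds hx.1 hx.2)).deriv]
      exact hE0
end

section
/- Take f(y) = y² for all y ∈ [0,1]. If H^{11} ≤ H^{22} + 2H^{12}, H^{22} ≤ H^{11} + 2H^{21}, and 10 H_1 H_2 + 4(H^{12} − H^{11})(H_1 + H_2) ≥ 5 H_2² + H_1², then the quadratic P_3(y) := (H_1+H_2) y² + (H_1 − 3H_2) y + H_2 + H^{12} − H^{11} satisfies P_3(y) ≥ 0 for all y ∈ [0,1], and consequently h′(y) ≤ 0 for all y ∈ [0,1], i.e. h is non-increasing on [0,1]. -/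
open Set

/-!
Write `h = N / D` with `D y = y ^ 2 + (1 - y) ^ 2 > 0`. A direct computation gives
`N' D - N D' = -(2 y (1 - y) P₃(y) + H₁ (y (1 - 2y))² + H₂ ((1 - y)(1 - 2y))²)`,
so `h' ≤ 0` on `[0, 1]` as soon as `H₁, H₂ ≥ 0` and `P₃ ≥ 0` there. The condition
`5 H₂² + H₁² ≤ 10 H₁ H₂ + 4 (H¹² - H¹¹)(H₁ + H₂)` says exactly that the discriminant of `P₃`
is nonpositive, and its leading coefficient `H₁ + H₂` is positive, so `P₃ ≥ 0` on all of `ℝ`.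
-/

theorem quadratic_nonneg_of_discrim_nonpos {K : Type*} [Field K] [LinearOrder K]
    [IsStrictOrderedRing K] {a b c : K} (ha : 0 < a) (hd : discrim a b c ≤ 0) (x : K) :
    0 ≤ a * (x * x) + b * x + c := by
  have hsq : 4 * a * (a * (x * x) + b * x + c) = (2 * a * x + b) ^ 2 - discrim a b c := by
    rw [discrim]; ring
  have : 0 ≤ 4 * a * (a * (x * x) + b * x + c) := by
    rw [hsq]; linarith [sq_nonneg (2 * a * x + b)]
  exact nonneg_of_mul_nonneg_right this (by positivity)

namespace QuadraticSkew

variable (H11 H12 H1 H2 : ℝ)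

noncomputable def h (y : ℝ) : ℝ :=
  ((H11 - y * H1) * y ^ 2 + (H12 - y * H2) * (1 - y) ^ 2) / (y ^ 2 + (1 - y) ^ 2)

def P3 (y : ℝ) : ℝ := (H1 + H2) * y ^ 2 + (H1 - 3 * H2) * y + H2 + H12 - H11

theorem P3_nonneg (hH : 0 < H1 + H2)
    (hc : 5 * H2 ^ 2 + H1 ^ 2 ≤ 10 * H1 * H2 + 4 * (H12 - H11) * (H1 + H2)) (y : ℝ) :
    0 ≤ P3 H11 H12 H1 H2 y := by
  have hd : discrim (H1 + H2) (H1 - 3 * H2) (H2 + H12 - H11) ≤ 0 := by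
    rw [discrim]; linear_combination hc
  have := quadratic_nonneg_of_discrim_nonpos hH hd y
  rw [P3]; linear_combination this

theorem sq_add_one_sub_sq_pos (y : ℝ) : 0 < y ^ 2 + (1 - y) ^ 2 := by
  nlinarith [sq_nonneg (2 * y - 1)]

theorem hasDerivAt_h (y : ℝ) :
    HasDerivAt (h H11 H12 H1 H2)
      (-(2 * y * (1 - y) * P3 H11 H12 H1 H2 y + H1 * (y * (1 - 2 * y)) ^ 2
          + H2 * ((1 - y) * (1 - 2 * y)) ^ 2) / (y ^ 2 + (1 - y) ^ 2) ^ 2) y := by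
  have hy : HasDerivAt (fun t : ℝ => t) 1 y := hasDerivAt_id y
  have hy' : HasDerivAt (fun t : ℝ => 1 - t) (-1) y := by simpa using hy.const_sub 1
  have hN := ((hy.mul_const H1).const_sub H11).fun_mul (hy.fun_pow 2)
    |>.fun_add (((hy.mul_const H2).const_sub H12).fun_mul (hy'.fun_pow 2))
  have hD := (hy.fun_pow 2).fun_add (hy'.fun_pow 2)
  refine (hN.fun_div hD (sq_add_one_sub_sq_pos y).ne').congr_deriv ?_
  rw [P3]; ring

theorem deriv_h_nonpos (hH1 : 0 ≤ H1) (hH2 : 0 ≤ H2) {y : ℝ} (hy : y ∈ Icc (0 : ℝ) 1)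
    (hP : 0 ≤ P3 H11 H12 H1 H2 y) : deriv (h H11 H12 H1 H2) y ≤ 0 := by
  have hyP : 0 ≤ 2 * y * (1 - y) * P3 H11 H12 H1 H2 y :=
    mul_nonneg (by nlinarith [hy.1, hy.2]) hP
  rw [(hasDerivAt_h H11 H12 H1 H2 y).deriv, neg_div]
  exact neg_nonpos.2 (div_nonneg (by positivity) (sq_nonneg _))

end QuadraticSkew

theorem quadratic_model_h_nonincreasing_general
    (H11 H12 H21 H22 : ℝ)
    (hH11 : 0 ≤ H11) (hH22 : 0 ≤ H22) (hH12 : 0 < H12) (hH21 : 0 < H21)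
    (H1 H2 : ℝ) (hH1 : H1 = H11 + H21) (hH2 : H2 = H12 + H22)
    (h : ℝ → ℝ)
    (hh : ∀ y, h y =
      ((H11 - y * H1) * y ^ 2 + (H12 - y * H2) * (1 - y) ^ 2) / (y ^ 2 + (1 - y) ^ 2))
    (P3 : ℝ → ℝ)
    (hP3 : ∀ y, P3 y = (H1 + H2) * y ^ 2 + (H1 - 3 * H2) * y + H2 + H12 - H11)
    (hc3 : 5 * H2 ^ 2 + H1 ^ 2 ≤ 10 * H1 * H2 + 4 * (H12 - H11) * (H1 + H2)) :
    (∀ y ∈ Set.Icc (0:ℝ) 1, 0 ≤ P3 y) ∧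
    (∀ y ∈ Set.Icc (0:ℝ) 1, deriv h y ≤ 0) ∧
    AntitoneOn h (Set.Icc 0 1) := by
  obtain rfl : h = QuadraticSkew.h H11 H12 H1 H2 := funext hh
  obtain rfl : P3 = QuadraticSkew.P3 H11 H12 H1 H2 := funext hP3
  have hP : ∀ y, 0 ≤ QuadraticSkew.P3 H11 H12 H1 H2 y :=
    QuadraticSkew.P3_nonneg H11 H12 H1 H2 (by linarith) hc3
  have hderiv : ∀ y ∈ Icc (0 : ℝ) 1, deriv (QuadraticSkew.h H11 H12 H1 H2) y ≤ 0 :=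
    fun y hy => QuadraticSkew.deriv_h_nonpos H11 H12 H1 H2 (by linarith) (by linarith) hy (hP y)
  have hdiff : Differentiable ℝ (QuadraticSkew.h H11 H12 H1 H2) :=
    fun y => (QuadraticSkew.hasDerivAt_h H11 H12 H1 H2 y).differentiableAt
  refine ⟨fun y _ => hP y, hderiv, ?_⟩
  refine antitoneOn_of_deriv_nonpos (convex_Icc 0 1) hdiff.continuous.continuousOn
    hdiff.differentiableOn fun y hy => hderiv y ?_
  rw [interior_Icc] at hy
  exact Ioo_subset_Icc_self hy

/-- Quadratic skewing function f(y) = y²: sufficient conditions for h to be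
non-increasing on [0,1]. -/
theorem quadratic_model_h_nonincreasing
    (H11 H12 H21 H22 : ℝ)
    (hH11 : 0 ≤ H11) (hH22 : 0 ≤ H22) (hH12 : 0 < H12) (hH21 : 0 < H21)
    (H1 H2 : ℝ) (hH1 : H1 = H11 + H21) (hH2 : H2 = H12 + H22) (hHne : H1 ≠ H2)
    (h : ℝ → ℝ)
    (hh : ∀ y, h y =
      ((H11 - y * H1) * y ^ 2 + (H12 - y * H2) * (1 - y) ^ 2) / (y ^ 2 + (1 - y) ^ 2))
    (P3 : ℝ → ℝ)
    (hP3 : ∀ y, P3 y = (H1 + H2) * y ^ 2 + (H1 - 3 * H2) * y + H2 + H12 - H11)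
    (hc1 : H11 ≤ H22 + 2 * H12) (hc2 : H22 ≤ H11 + 2 * H21)
    (hc3 : 5 * H2 ^ 2 + H1 ^ 2 ≤ 10 * H1 * H2 + 4 * (H12 - H11) * (H1 + H2)) :
    (∀ y ∈ Set.Icc (0:ℝ) 1, 0 ≤ P3 y) ∧
    (∀ y ∈ Set.Icc (0:ℝ) 1, deriv h y ≤ 0) ∧
    AntitoneOn h (Set.Icc 0 1) :=
  quadratic_model_h_nonincreasing_general H11 H12 H21 H22 hH11 hH22 hH12 hH21 H1 H2 hH1 hH2 h hh P3
    hP3 hc3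
end
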